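/- arXiv:2110.03038 — 5 statements merged into one kernel-verified Lean document; each statement's English description precedes it below -/
import Mathlib

section
/- Let ℰ_n be the 2×2 complex matrix with first row (P_n′(i), P_{n−2}′(i)) and second row (∫ P_n(x)(1+x²)^{−2} dμ(x), ∫ P_{n−2}(x)(1+x²)^{−2} dμ(x)), and let 𝒪_n be the 2×2 complex matrix with first row (P_n′(i), P_{n−2}′(i)) and second row (∫ (x³+3x)P_n(x)(1+x²)^{−2} dμ(x), ∫ (x³+3x)P_{n−2}(x)(1+x²)^{−2} dμ(x)). Then there exist real numbers (A_n)_{n≥1}, (B_n)_{n≥2} such that the family R_0 = 1, R_1 = P_3 + A_1 P_1, R_n = P_{n+2} + A_n P_n + B_n P_{n−2} (n ≥ 2) satisfies (i) R_n′(i) = 0 for all n ≥ 1, (ii) ∫ R_n(x)(1+x²)^{−2} dμ(x) = 0 for all n ≥ 1, and (iii) ∫ R_1(x)R_n(x)(1+x²)^{−2} dμ(x) = 0 for all n ≥ 2, if and only if det ℰ_n ≠ 0 for every even n ≥ 2 and det 𝒪_n ≠ 0 for every odd n ≥ 3. -/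
/-!
For `n ≥ 2` the unknowns `A n`, `B n` are subject to three linear conditions on `R n`:
`R n'(i) = 0`, `∫ R n dν = 0` and `∫ R₁ R n dν = 0`, where `dν = (1 + x²)⁻² dμ` and
`R₁ = x³ + 3x` is forced by `R₁'(i) = 0`. Since `μ` is symmetric, for even `n` only
`Im R n'(i) = 0` and `∫ R n dν = 0` carry information, for odd `n` only `Re R n'(i) = 0` and
`∫ R₁ R n dν = 0`; the determinants of these `2 × 2` systems are `det ℰ (n + 2) / i` and
`det 𝒪 (n + 2)`, so nonvanishing determinants produce the family by Cramer's rule.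

Conversely, if such a determinant vanishes, some nonzero combination
`Λ p = α ℓ (p'(i)) + β ∫ w p dν` (`ℓ = Im, w = 1` or `ℓ = Re, w = x³ + 3x`) kills `P n` and
`P (n + 2)`, hence, through the three-term relations `R m = P (m + 2) + A m P m + B m P (m - 2)`
and parity, every `P j` with `j ≥ n`. By orthogonality `Λ` is then integration against a
polynomial `g` with respect to `μ`. Testing `Λ` on `(1 + x²)² q` shows `β w = (1 + x²)² g`;
evaluating at `i` gives `β = 0`, hence `g = 0` and `α = 0`.
-/

open MeasureTheory Polynomial

/-- Evaluation of a real polynomial at a complex point. -/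
noncomputable def evC (p : Polynomial ℝ) (z : ℂ) : ℂ :=
  (p.map (algebraMap ℝ ℂ)).eval z

/-- Evaluation of the derivative of a real polynomial at a complex point. -/
noncomputable def devC (p : Polynomial ℝ) (z : ℂ) : ℂ :=
  (Polynomial.derivative (p.map (algebraMap ℝ ℂ))).eval z

/-- The (topological) support of a measure on ℝ: points all of whose
neighborhoods have nonzero measure. -/
def measSupport (μ : Measure ℝ) : Set ℝ := {x | ∀ U ∈ nhds x, μ U ≠ 0}

noncomputable def derivAtI : ℝ[X] →ₗ[ℝ] ℂ :=
  (aeval Complex.I).toLinearMap ∘ₗ derivative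

lemma derivAtI_apply (p : ℝ[X]) : derivAtI p = devC p Complex.I := by
  simp [derivAtI, devC, derivative_map, eval_map_algebraMap]

lemma derivAtI_one_add_X_sq_sq_mul (p : ℝ[X]) : derivAtI ((1 + X ^ 2) ^ 2 * p) = 0 := by
  simp [derivAtI, derivative_pow, Complex.I_sq]

lemma derivAtI_X_pow_three_add_C_mul_X (a : ℝ) : derivAtI (X ^ 3 + C a * X) = a - 3 := by
  simp [derivAtI, Complex.I_sq]
  ring

lemma aeval_I_X_pow_three_add_C_three_mul_X :
    aeval Complex.I (X ^ 3 + C 3 * X : ℝ[X]) = 2 * Complex.I := by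
  simp only [pow_succ, pow_zero, one_mul, map_add, map_mul, aeval_X, Complex.I_mul_I, neg_mul,
    aeval_C, Complex.coe_algebraMap, Complex.ofReal_ofNat]
  ring

lemma comp_neg_X_of_eval_neg {p : ℝ[X]} {ε : ℝ} (h : ∀ x, p.eval (-x) = ε * p.eval x) :
    p.comp (-X) = C ε * p :=
  Polynomial.funext fun x => by simp [h]

lemma conj_derivAtI_of_comp_neg_X {p : ℝ[X]} {ε : ℝ} (h : p.comp (-X) = C ε * p) :
    (starRingEnd ℂ) (derivAtI p) = -ε * derivAtI p := by
  have h' := congrArg (aeval Complex.I ∘ derivative) h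
  simp only [Function.comp_apply, derivative_comp, derivative_X, derivative_mul, derivative_C,
    zero_mul, zero_add, map_mul, aeval_comp, map_neg, aeval_X, aeval_C] at h'
  rw [← Complex.conj_I, ← Complex.conjAe_coe, aeval_algHom_apply] at h'
  simp only [derivAtI, LinearMap.comp_apply, AlgHom.toLinearMap_apply]
  simp only [map_one, Complex.conjAe_coe, neg_mul, one_mul, Complex.coe_algebraMap] at h'
  linear_combination -h'

lemma re_derivAtI_eq_zero_of_even {p : ℝ[X]} (h : p.comp (-X) = p) : (derivAtI p).re = 0 := by
  have := congrArg Complex.re (conj_derivAtI_of_comp_neg_X (ε := 1) (by simpa using h))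
  simp only [Complex.conj_re, Complex.ofReal_one, neg_mul, one_mul, Complex.neg_re] at this
  linarith

lemma im_derivAtI_eq_zero_of_odd {p : ℝ[X]} (h : p.comp (-X) = -p) : (derivAtI p).im = 0 := by
  have := congrArg Complex.im (conj_derivAtI_of_comp_neg_X (ε := -1) (by simpa using h))
  simp only [Complex.conj_im, Complex.ofReal_neg, Complex.ofReal_one, neg_neg, one_mul] at this
  linarith

lemma coeff_eq_zero_of_odd {p : ℝ[X]} (h : p.comp (-X) = -p) {k : ℕ} (hk : Even k) :
    p.coeff k = 0 := by
  have := congrArg (coeff · k) h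
  simp only [show (-X : ℝ[X]) = C (-1) * X by simp, comp_C_mul_X_coeff, hk.neg_one_pow,
    coeff_neg] at this
  linarith

lemma eq_of_odd_of_natDegree_le_three {p : ℝ[X]} (h : p.comp (-X) = -p) (hd : p.natDegree ≤ 3) :
    p = C (p.coeff 3) * X ^ 3 + C (p.coeff 1) * X := by
  ext (_ | _ | _ | _ | k)
  · simp [coeff_eq_zero_of_odd h (by decide : Even 0)]
  · simp
  · simp [coeff_eq_zero_of_odd h (by decide : Even 2)]
  · simp
  · simp [coeff_eq_zero_of_natDegree_lt (show p.natDegree < k + 4 by omega)]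

lemma span_range_eq_top_of_monic {P : ℕ → ℝ[X]} (hmonic : ∀ n, (P n).Monic)
    (hdeg : ∀ n, (P n).natDegree = n) : Submodule.span ℝ (Set.range P) = ⊤ :=
  Sequence.span (S := ⟨P, fun n => by rw [degree_eq_natDegree (hmonic n).ne_zero, hdeg]⟩)
    fun n => by simp [(hmonic n).leadingCoeff]

lemma eq_zero_of_three_term {s a b : ℕ → ℝ}
    (hs : ∀ j, s (j + 4) + a j * s (j + 2) + b j * s j = 0) {n : ℕ} (h₀ : s n = 0)
    (h₂ : s (n + 2) = 0) (k : ℕ) : s (n + 2 * k) = 0 := by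
  suffices ∀ k, s (n + 2 * k) = 0 ∧ s (n + 2 * k + 2) = 0 from (this k).1
  intro k
  induction k with
  | zero => exact ⟨h₀, h₂⟩
  | succ k ih =>
    have := hs (n + 2 * k)
    rw [ih.1, ih.2, show n + 2 * k + 4 = n + 2 * (k + 1) + 2 by ring] at this
    exact ⟨ih.2, by simpa using this⟩

lemma det_ne_zero_of_three_term {d e a b : ℕ → ℝ} {n : ℕ}
    (hindep : ∀ α β N, (∀ j, N ≤ j → α * d j + β * e j = 0) → α = 0 ∧ β = 0)
    (hpar : ∀ j, j % 2 ≠ n % 2 → d j = 0 ∧ e j = 0)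
    (hd : ∀ j, d (j + 4) + a j * d (j + 2) + b j * d j = 0)
    (he : ∀ j, e (j + 4) + a j * e (j + 2) + b j * e j = 0) :
    !![d (n + 2), d n; e (n + 2), e n].det ≠ 0 := by
  intro hdet
  obtain ⟨v, hv0, hv⟩ := Matrix.exists_vecMul_eq_zero_iff.mpr hdet
  set s : ℕ → ℝ := fun j => v 0 * d j + v 1 * e j
  have hs : ∀ j, s (j + 4) + a j * s (j + 2) + b j * s j = 0 := fun j => by
    linear_combination v 0 * hd j + v 1 * he j
  have hn : s (n + 2) = 0 ∧ s n = 0 := by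
    simpa [Matrix.vecMul, dotProduct, Fin.sum_univ_two] using And.intro (congrFun hv 0) (congrFun hv 1)
  have htail : ∀ j, n ≤ j → s j = 0 := by
    intro j hj
    by_cases hjn : j % 2 = n % 2
    · obtain ⟨k, rfl⟩ : ∃ k, j = n + 2 * k := ⟨(j - n) / 2, by omega⟩
      exact eq_zero_of_three_term hs hn.2 hn.1 k
    · simp [s, hpar j hjn]
  obtain ⟨h₀, h₁⟩ := hindep _ _ n htail
  exact hv0 (by ext i; fin_cases i <;> simp [h₀, h₁])

lemma exists_add_mul_add_mul_eq_zero {p₁ q₁ r₁ p₂ q₂ r₂ : ℝ} (h : !![q₁, r₁; q₂, r₂].det ≠ 0) :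
    ∃ a b : ℝ, p₁ + a * q₁ + b * r₁ = 0 ∧ p₂ + a * q₂ + b * r₂ = 0 := by
  rw [Matrix.det_fin_two_of] at h
  refine ⟨(r₁ * p₂ - p₁ * r₂) / (q₁ * r₂ - r₁ * q₂), (p₁ * q₂ - q₁ * p₂) / (q₁ * r₂ - r₁ * q₂),
    ?_, ?_⟩
  · linear_combination (-p₁) * mul_inv_cancel₀ h
  · linear_combination (-p₂) * mul_inv_cancel₀ h

lemma map_add_C_mul_add_C_mul {R : Type*} [CommRing R] (Λ : R[X] →ₗ[R] R) (p q r : R[X])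
    (a b : R) : Λ (p + C a * q + C b * r) = Λ p + a * Λ q + b * Λ r := by
  simp [← smul_eq_C_mul]

lemma exists_map_eq_zero_of_det_ne_zero (D J : ℝ[X] →ₗ[ℝ] ℝ) (p : ℝ[X]) {q r : ℝ[X]}
    (h : !![D q, D r; J q, J r].det ≠ 0) :
    ∃ a b : ℝ, D (p + C a * q + C b * r) = 0 ∧ J (p + C a * q + C b * r) = 0 := by
  simpa only [map_add_C_mul_add_C_mul] using
    exists_add_mul_add_mul_eq_zero (p₁ := D p) (p₂ := J p) h

lemma det_eq_I_mul_of_re_eq_zero {d₁ d₂ : ℂ} (h₁ : d₁.re = 0) (h₂ : d₂.re = 0) (l₁ l₂ : ℝ) :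
    !![d₁, d₂; (l₁ : ℂ), (l₂ : ℂ)].det = Complex.I * (!![d₁.im, d₂.im; l₁, l₂].det : ℝ) := by
  apply Complex.ext <;> simp [Matrix.det_fin_two_of, h₁, h₂]

lemma det_eq_ofReal_of_im_eq_zero {d₁ d₂ : ℂ} (h₁ : d₁.im = 0) (h₂ : d₂.im = 0) (l₁ l₂ : ℝ) :
    !![d₁, d₂; (l₁ : ℂ), (l₂ : ℂ)].det = (!![d₁.re, d₂.re; l₁, l₂].det : ℝ) := by
  apply Complex.ext <;> simp [Matrix.det_fin_two_of, h₁, h₂]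

section Integrals

variable {μ : Measure ℝ} (hint : ∀ p : ℝ[X], Integrable (fun x => p.eval x) μ)

noncomputable def polyIntegral : ℝ[X] →ₗ[ℝ] ℝ where
  toFun p := ∫ x, p.eval x ∂μ
  map_add' p q := by simp [integral_add (hint p) (hint q)]
  map_smul' a p := by simp [integral_const_mul]

include hint in
lemma integrable_eval_div_one_add_sq_sq (p : ℝ[X]) :
    Integrable (fun x => p.eval x / (1 + x ^ 2) ^ 2) μ := by
  refine (hint p).mono ?_ (.of_forall fun x => ?_)
  · exact (p.continuous.div (by fun_prop) fun x => by positivity).aestronglyMeasurable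
  have : (1 : ℝ) ≤ (1 + x ^ 2) ^ 2 := by nlinarith [sq_nonneg x]
  rw [norm_div, Real.norm_of_nonneg (by positivity : (0 : ℝ) ≤ (1 + x ^ 2) ^ 2)]
  exact div_le_self (norm_nonneg _) this

noncomputable def weightedIntegral : ℝ[X] →ₗ[ℝ] ℝ where
  toFun p := ∫ x, p.eval x / (1 + x ^ 2) ^ 2 ∂μ
  map_add' p q := by
    simp [add_div, integral_add (integrable_eval_div_one_add_sq_sq hint p)
      (integrable_eval_div_one_add_sq_sq hint q)]
  map_smul' a p := by simp [mul_div_assoc, integral_const_mul]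

lemma weightedIntegral_apply (p : ℝ[X]) :
    weightedIntegral hint p = ∫ x, p.eval x / (1 + x ^ 2) ^ 2 ∂μ := rfl

lemma weightedIntegral_one_add_X_sq_sq_mul (p : ℝ[X]) :
    weightedIntegral hint ((1 + X ^ 2) ^ 2 * p) = polyIntegral hint p := by
  simp only [weightedIntegral_apply, polyIntegral, LinearMap.coe_mk, AddHom.coe_mk]
  congr 1 with x
  simp only [eval_mul, eval_pow, eval_add, eval_one, eval_X]
  field_simp

lemma weightedIntegral_eq_zero_of_odd (hsymm : μ.map (fun x => -x) = μ) {q : ℝ[X]}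
    (hq : q.comp (-X) = -q) : weightedIntegral hint q = 0 := by
  have : μ.IsNegInvariant := ⟨hsymm⟩
  have hneg : ∀ x, q.eval (-x) = -q.eval x := fun x => by
    simpa using congrArg (eval x) hq
  have := integral_neg_eq_self (fun x => q.eval x / (1 + x ^ 2) ^ 2) μ
  simp only [hneg, neg_sq, neg_div, integral_neg] at this
  rw [weightedIntegral_apply]
  linarith

lemma weightedIntegral_cubic_mul_eq_zero_of_even (hsymm : μ.map (fun x => -x) = μ) {q : ℝ[X]}
    (hq : q.comp (-X) = q) : weightedIntegral hint ((X ^ 3 + C 3 * X) * q) = 0 :=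
  weightedIntegral_eq_zero_of_odd hint hsymm (by simp only [mul_comp, add_comp, pow_comp, X_comp, C_comp, mul_neg, hq]; ring)

lemma eq_zero_of_polyIntegral_mul_self_eq_zero (hsupp : (measSupport μ).Infinite) {t : ℝ[X]}
    (h : polyIntegral hint (t * t) = 0) : t = 0 := by
  by_contra ht
  obtain ⟨x, hx, hxt⟩ := (hsupp.sdiff (finite_setOfPred_isRoot ht)).nonempty
  have hae : (fun y => t.eval y * t.eval y) =ᵐ[μ] 0 := by
    refine (integral_eq_zero_iff_of_nonneg (fun y => mul_self_nonneg _) ?_).mp ?_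
    · simpa using hint (t * t)
    · simpa [polyIntegral] using h
  have hopen : IsOpen {y | t.eval y ≠ 0} := isOpen_ne_fun t.continuous continuous_const
  refine hx _ (hopen.mem_nhds hxt) (measure_mono_null (fun y hy => ?_) (ae_iff.mp hae))
  simpa using hy

lemma exists_eq_polyIntegral_comp_mulRight {P : ℕ → ℝ[X]}
    (horth : ∀ m n, m ≠ n → polyIntegral hint (P m * P n) = 0)
    (hnorm : ∀ n, polyIntegral hint (P n * P n) ≠ 0)
    (hspan : Submodule.span ℝ (Set.range P) = ⊤)
    (Λ : ℝ[X] →ₗ[ℝ] ℝ) {N : ℕ} (hΛ : ∀ j, N ≤ j → Λ (P j) = 0) :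
    ∃ g, Λ = polyIntegral hint ∘ₗ LinearMap.mulRight ℝ g := by
  set c : ℕ → ℝ := fun j => Λ (P j) / polyIntegral hint (P j * P j)
  refine ⟨∑ j ∈ Finset.range N, c j • P j, LinearMap.ext_on_range hspan fun k => ?_⟩
  have hterm : ∀ j, c j * polyIntegral hint (P k * P j) = if k = j then Λ (P k) else 0 := by
    intro j
    split_ifs with hkj
    · subst hkj
      exact div_mul_cancel₀ _ (hnorm k)
    · rw [horth k j hkj, mul_zero]
  simp only [LinearMap.comp_apply, LinearMap.mulRight_apply, Finset.mul_sum, mul_smul_comm,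
    map_sum, map_smul, smul_eq_mul, hterm, Finset.sum_ite_eq, Finset.mem_range]
  split_ifs with hk
  · rfl
  · exact hΛ k (not_lt.mp hk)

lemma eq_zero_of_smul_comp_derivAtI_add_smul_eq (hsupp : (measSupport μ).Infinite)
    (ℓ : ℂ →ₗ[ℝ] ℝ) {p₀ : ℝ[X]} (hp₀ : ℓ (derivAtI p₀) ≠ 0) {w : ℝ[X]}
    (hw : aeval Complex.I w ≠ 0) {α β : ℝ} {g : ℝ[X]}
    (h : α • (ℓ ∘ₗ derivAtI) + β • (weightedIntegral hint ∘ₗ LinearMap.mulLeft ℝ w) =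
      polyIntegral hint ∘ₗ LinearMap.mulRight ℝ g) :
    α = 0 ∧ β = 0 := by
  have happ : ∀ p, α * ℓ (derivAtI p) + β * weightedIntegral hint (w * p) =
      polyIntegral hint (p * g) := fun p => by simpa using LinearMap.congr_fun h p
  set t : ℝ[X] := C β * w - (1 + X ^ 2) ^ 2 * g
  have horth : ∀ q, polyIntegral hint (q * t) = 0 := by
    intro q
    have hq := happ ((1 + X ^ 2) ^ 2 * q)
    rw [derivAtI_one_add_X_sq_sq_mul, mul_left_comm, weightedIntegral_one_add_X_sq_sq_mul] at hq
    have : q * t = β • (w * q) - (1 + X ^ 2) ^ 2 * q * g := by rw [smul_eq_C_mul]; ring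
    rw [this, map_sub, map_smul, smul_eq_mul, ← hq, map_zero]
    ring
  have ht : t = 0 := eq_zero_of_polyIntegral_mul_self_eq_zero hint hsupp (horth t)
  have hβ : β = 0 := by
    simpa [t, Complex.I_sq, hw] using congrArg (aeval Complex.I) ht
  have hg : g = 0 := by
    have hX : (1 + X ^ 2 : ℝ[X]) ^ 2 ≠ 0 :=
      pow_ne_zero _ fun h => by simpa using congrArg (eval 0) h
    simpa [t, hβ, hX] using ht
  refine ⟨?_, hβ⟩
  simpa [hβ, hg, hp₀] using happ p₀

theorem det_ne_zero_of_forall_map_eq_zero (hsupp : (measSupport μ).Infinite) {P : ℕ → ℝ[X]}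
    (hmonic : ∀ n, (P n).Monic) (hdeg : ∀ n, (P n).natDegree = n)
    (horth : ∀ m n, m ≠ n → polyIntegral hint (P m * P n) = 0)
    (ℓ : ℂ →ₗ[ℝ] ℝ) {p₀ : ℝ[X]} (hp₀ : ℓ (derivAtI p₀) ≠ 0) {w : ℝ[X]}
    (hw : aeval Complex.I w ≠ 0) {n : ℕ}
    (hpar : ∀ j, j % 2 ≠ n % 2 →
      ℓ (derivAtI (P j)) = 0 ∧ weightedIntegral hint (w * P j) = 0)
    {a b : ℕ → ℝ}
    (hQ : ∀ j, ℓ (derivAtI (P (j + 4) + C (a j) * P (j + 2) + C (b j) * P j)) = 0 ∧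
      weightedIntegral hint (w * (P (j + 4) + C (a j) * P (j + 2) + C (b j) * P j)) = 0) :
    !![ℓ (derivAtI (P (n + 2))), ℓ (derivAtI (P n));
      weightedIntegral hint (w * P (n + 2)), weightedIntegral hint (w * P n)].det ≠ 0 := by
  set D := ℓ ∘ₗ derivAtI
  set J := weightedIntegral hint ∘ₗ LinearMap.mulLeft ℝ w
  have hnorm : ∀ n, polyIntegral hint (P n * P n) ≠ 0 := fun n h =>
    (hmonic n).ne_zero (eq_zero_of_polyIntegral_mul_self_eq_zero hint hsupp h)
  refine det_ne_zero_of_three_term (d := fun j => D (P j)) (e := fun j => J (P j)) (a := a)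
    (b := b) (fun α β N hN => ?_) hpar (fun j => ?_) (fun j => ?_)
  · obtain ⟨g, hg⟩ := exists_eq_polyIntegral_comp_mulRight hint horth hnorm
      (span_range_eq_top_of_monic hmonic hdeg) (α • D + β • J) (N := N) (by simpa using hN)
    exact eq_zero_of_smul_comp_derivAtI_add_smul_eq hint hsupp ℓ hp₀ hw hg
  · exact (map_add_C_mul_add_C_mul D _ _ _ _ _).symm.trans (hQ j).1
  · exact (map_add_C_mul_add_C_mul J _ _ _ _ _).symm.trans (hQ j).2

/-- The conditions on `R n` for `n ≥ 2`; the cubic is `R 1`, forced by `R 1'(i) = 0`. -/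
def IsAdmissible (q : ℝ[X]) : Prop :=
  derivAtI q = 0 ∧ weightedIntegral hint q = 0 ∧
    weightedIntegral hint ((X ^ 3 + C 3 * X) * q) = 0

variable (μ) (P : ℕ → ℝ[X])

/-- `ℰ n` in the notation of the paper. -/
noncomputable def matE (n : ℕ) : Matrix (Fin 2) (Fin 2) ℂ :=
  !![devC (P n) Complex.I, devC (P (n - 2)) Complex.I;
    ((∫ x, (P n).eval x / (1 + x ^ 2) ^ 2 ∂μ : ℝ) : ℂ),
    ((∫ x, (P (n - 2)).eval x / (1 + x ^ 2) ^ 2 ∂μ : ℝ) : ℂ)]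

/-- `𝒪 n` in the notation of the paper. -/
noncomputable def matO (n : ℕ) : Matrix (Fin 2) (Fin 2) ℂ :=
  !![devC (P n) Complex.I, devC (P (n - 2)) Complex.I;
    ((∫ x, (x ^ 3 + 3 * x) * (P n).eval x / (1 + x ^ 2) ^ 2 ∂μ : ℝ) : ℂ),
    ((∫ x, (x ^ 3 + 3 * x) * (P (n - 2)).eval x / (1 + x ^ 2) ^ 2 ∂μ : ℝ) : ℂ)]

def IsDEKFamily (A B : ℕ → ℝ) (R : ℕ → ℝ[X]) : Prop :=
  R 0 = 1 ∧
  R 1 = P 3 + C (A 1) * P 1 ∧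
  (∀ n, 2 ≤ n → R n = P (n + 2) + C (A n) * P n + C (B n) * P (n - 2)) ∧
  (∀ n, 1 ≤ n → devC (R n) Complex.I = 0) ∧
  (∀ n, 1 ≤ n → ∫ x, (R n).eval x / (1 + x ^ 2) ^ 2 ∂μ = 0) ∧
  (∀ n, 2 ≤ n → ∫ x, (R 1).eval x * (R n).eval x / (1 + x ^ 2) ^ 2 ∂μ = 0)

variable {μ P}

section Parity

variable (hpar : ∀ n, (P n).comp (-X) = C ((-1 : ℝ) ^ n) * P n)
include hpar

lemma comp_neg_X_of_even {j : ℕ} (hj : Even j) : (P j).comp (-X) = P j := by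
  simp [hpar, hj.neg_one_pow]

lemma comp_neg_X_of_odd {j : ℕ} (hj : Odd j) : (P j).comp (-X) = -P j := by
  simp [hpar, hj.neg_one_pow]

lemma P_one_eq_X_and_P_three_eq (hmonic : ∀ n, (P n).Monic) (hdeg : ∀ n, (P n).natDegree = n) :
    P 1 = X ∧ P 3 = X ^ 3 + C ((P 3).coeff 1) * X := by
  have h₁ := eq_of_odd_of_natDegree_le_three (comp_neg_X_of_odd hpar odd_one) (by simp [hdeg])
  have h₃ := eq_of_odd_of_natDegree_le_three (comp_neg_X_of_odd hpar (by decide : Odd 3))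
    (hdeg 3).le
  have hc₁ : (P 1).coeff 1 = 1 := by simpa [hdeg] using (hmonic 1).coeff_natDegree
  have hc₃ : (P 3).coeff 3 = 1 := by simpa [hdeg] using (hmonic 3).coeff_natDegree
  rw [coeff_eq_zero_of_natDegree_lt (by simp [hdeg]), hc₁] at h₁
  rw [hc₃] at h₃
  exact ⟨by simpa using h₁, by simpa using h₃⟩

lemma det_matE_ne_zero_iff {k : ℕ} (hk : Even k) :
    (matE μ P (k + 2)).det ≠ 0 ↔
      !![Complex.imLm (derivAtI (P (k + 2))), Complex.imLm (derivAtI (P k));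
        weightedIntegral hint (P (k + 2)), weightedIntegral hint (P k)].det ≠ 0 := by
  have hk2 : Even (k + 2) := by simpa [parity_simps] using hk
  rw [matE, Nat.add_sub_cancel, det_eq_I_mul_of_re_eq_zero]
  · simp only [ne_eq, mul_eq_zero, Complex.I_ne_zero, Complex.ofReal_eq_zero, false_or,
      Complex.imLm_coe, derivAtI_apply, weightedIntegral_apply]
  all_goals rw [← derivAtI_apply]; exact re_derivAtI_eq_zero_of_even (comp_neg_X_of_even hpar ‹_›)

lemma det_matO_ne_zero_iff {k : ℕ} (hk : Odd k) :
    (matO μ P (k + 2)).det ≠ 0 ↔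
      !![Complex.reLm (derivAtI (P (k + 2))), Complex.reLm (derivAtI (P k));
        weightedIntegral hint ((X ^ 3 + C 3 * X) * P (k + 2)),
        weightedIntegral hint ((X ^ 3 + C 3 * X) * P k)].det ≠ 0 := by
  have hk2 : Odd (k + 2) := by simpa [parity_simps] using hk
  rw [matO, Nat.add_sub_cancel, det_eq_ofReal_of_im_eq_zero]
  · simp only [ne_eq, Complex.ofReal_eq_zero, Complex.reLm_coe, derivAtI_apply,
      weightedIntegral_apply, eval_mul, eval_add, eval_pow, eval_X, eval_C]
  all_goals rw [← derivAtI_apply]; exact im_derivAtI_eq_zero_of_odd (comp_neg_X_of_odd hpar ‹_›)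

theorem exists_isAdmissible_of_det_ne_zero (hsymm : μ.map (fun x => -x) = μ)
    (hE : ∀ n, 2 ≤ n → Even n → (matE μ P n).det ≠ 0)
    (hO : ∀ n, 3 ≤ n → Odd n → (matO μ P n).det ≠ 0) (k : ℕ) :
    ∃ a b, IsAdmissible hint (P (k + 4) + C a * P (k + 2) + C b * P k) := by
  rcases Nat.even_or_odd k with hk | hk
  · have hdet := (det_matE_ne_zero_iff hint hpar hk).mp
      (hE (k + 2) (by omega) (by simpa [parity_simps] using hk))
    obtain ⟨a, b, hD, hJ⟩ :=
      exists_map_eq_zero_of_det_ne_zero (Complex.imLm ∘ₗ derivAtI) (weightedIntegral hint)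
        (P (k + 4)) hdet
    have hcomp : (P (k + 4) + C a * P (k + 2) + C b * P k).comp (-X) =
        P (k + 4) + C a * P (k + 2) + C b * P k := by
      simp only [add_comp, mul_comp, C_comp, comp_neg_X_of_even hpar hk,
        comp_neg_X_of_even hpar (hk.add (by decide : Even 2)),
        comp_neg_X_of_even hpar (hk.add (by decide : Even 4))]
    exact ⟨a, b, Complex.ext (re_derivAtI_eq_zero_of_even hcomp) hD, hJ,
      weightedIntegral_cubic_mul_eq_zero_of_even hint hsymm hcomp⟩
  · have hdet := (det_matO_ne_zero_iff hint hpar hk).mp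
      (hO (k + 2) (by obtain ⟨m, rfl⟩ := hk; omega) (by simpa [parity_simps] using hk))
    obtain ⟨a, b, hD, hJ⟩ :=
      exists_map_eq_zero_of_det_ne_zero (Complex.reLm ∘ₗ derivAtI)
        (weightedIntegral hint ∘ₗ LinearMap.mulLeft ℝ (X ^ 3 + C 3 * X)) (P (k + 4)) hdet
    have hcomp : (P (k + 4) + C a * P (k + 2) + C b * P k).comp (-X) =
        -(P (k + 4) + C a * P (k + 2) + C b * P k) := by
      simp only [add_comp, mul_comp, C_comp, comp_neg_X_of_odd hpar hk,
        comp_neg_X_of_odd hpar (hk.add_even (by decide : Even 2)),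
        comp_neg_X_of_odd hpar (hk.add_even (by decide : Even 4))]
      ring
    exact ⟨a, b, Complex.ext hD (im_derivAtI_eq_zero_of_odd hcomp),
      weightedIntegral_eq_zero_of_odd hint hsymm hcomp, hJ⟩

variable (hsymm : μ.map (fun x => -x) = μ) (hsupp : (measSupport μ).Infinite)
  (hmonic : ∀ n, (P n).Monic) (hdeg : ∀ n, (P n).natDegree = n)
  (horth : ∀ m n, m ≠ n → polyIntegral hint (P m * P n) = 0) {A B : ℕ → ℝ}
  (hQ : ∀ j, IsAdmissible hint (P (j + 4) + C (A j) * P (j + 2) + C (B j) * P j))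
include hsymm hsupp hmonic hdeg horth hQ

theorem det_matE_ne_zero {n : ℕ} (hn : 2 ≤ n) (hev : Even n) : (matE μ P n).det ≠ 0 := by
  obtain ⟨k, rfl⟩ : ∃ k, n = k + 2 := ⟨n - 2, by omega⟩
  have hk : Even k := by simpa [parity_simps] using hev
  have hvanish : ∀ j, j % 2 ≠ k % 2 →
      Complex.imLm (derivAtI (P j)) = 0 ∧ weightedIntegral hint (1 * P j) = 0 := fun j hj => by
    have hj : (P j).comp (-X) = -P j :=
      comp_neg_X_of_odd hpar (Nat.odd_iff.mpr (by have := Nat.even_iff.mp hk; omega))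
    exact ⟨im_derivAtI_eq_zero_of_odd hj,
      by simpa using weightedIntegral_eq_zero_of_odd hint hsymm hj⟩
  rw [det_matE_ne_zero_iff hint hpar hk]
  simpa only [one_mul] using det_ne_zero_of_forall_map_eq_zero hint hsupp hmonic hdeg horth
    Complex.imLm (p₀ := X ^ 2) (by simp [derivAtI]) (w := 1) (by simp) hvanish
    (a := A) (b := B) (fun j => ⟨by simp [(hQ j).1], by simpa using (hQ j).2.1⟩)

theorem det_matO_ne_zero {n : ℕ} (hn : 3 ≤ n) (hodd : Odd n) : (matO μ P n).det ≠ 0 := by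
  obtain ⟨k, rfl⟩ : ∃ k, n = k + 2 := ⟨n - 2, by omega⟩
  have hk : Odd k := by simpa [parity_simps] using hodd
  have hvanish : ∀ j, j % 2 ≠ k % 2 → Complex.reLm (derivAtI (P j)) = 0 ∧
      weightedIntegral hint ((X ^ 3 + C 3 * X) * P j) = 0 := fun j hj => by
    have hj : (P j).comp (-X) = P j :=
      comp_neg_X_of_even hpar (Nat.even_iff.mpr (by have := Nat.odd_iff.mp hk; omega))
    exact ⟨re_derivAtI_eq_zero_of_even hj,
      weightedIntegral_cubic_mul_eq_zero_of_even hint hsymm hj⟩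
  rw [det_matO_ne_zero_iff hint hpar hk]
  exact det_ne_zero_of_forall_map_eq_zero hint hsupp hmonic hdeg horth
    Complex.reLm (p₀ := X) (by simp [derivAtI])
    (by simp [aeval_I_X_pow_three_add_C_three_mul_X, Complex.I_ne_zero]) hvanish
    (a := A) (b := B) (fun j => ⟨by simp [(hQ j).1], (hQ j).2.2⟩)

end Parity

variable {c : ℝ} (hP1 : P 1 = X) (hP3 : P 3 = X ^ 3 + C c * X)
include hP1 hP3

lemma IsDEKFamily.R_one_eq {A B : ℕ → ℝ} {R : ℕ → ℝ[X]} (hR : IsDEKFamily μ P A B R) :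
    R 1 = X ^ 3 + C 3 * X := by
  have h : R 1 = X ^ 3 + C (c + A 1) * X := by rw [hR.2.1, hP3, hP1, C_add]; ring
  have hd := hR.2.2.2.1 1 le_rfl
  rw [h, ← derivAtI_apply, derivAtI_X_pow_three_add_C_mul_X, sub_eq_zero] at hd
  rw [h, show c + A 1 = 3 by exact_mod_cast hd]

theorem IsDEKFamily.isAdmissible {A B : ℕ → ℝ} {R : ℕ → ℝ[X]} (hR : IsDEKFamily μ P A B R)
    (j : ℕ) : IsAdmissible hint (P (j + 4) + C (A (j + 2)) * P (j + 2) + C (B (j + 2)) * P j) := by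
  have hR1 := hR.R_one_eq hP1 hP3
  obtain ⟨-, -, hRn, hRd, hRi, hRo⟩ := hR
  have hRj := hRn (j + 2) le_add_self
  rw [Nat.add_sub_cancel] at hRj
  rw [← hRj]
  refine ⟨by rw [derivAtI_apply]; exact hRd _ (by omega), hRi _ (by omega), ?_⟩
  simpa [weightedIntegral_apply, hR1] using hRo (j + 2) le_add_self

theorem exists_isDEKFamily (hsymm : μ.map (fun x => -x) = μ) {a b : ℕ → ℝ}
    (hab : ∀ k, IsAdmissible hint (P (k + 4) + C (a k) * P (k + 2) + C (b k) * P k)) :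
    ∃ A B R, IsDEKFamily μ P A B R := by
  have hcubic : ((X : ℝ[X]) ^ 3 + C 3 * X).comp (-X) = -(X ^ 3 + C 3 * X) := by
    simp only [add_comp, pow_comp, X_comp, mul_comp, C_comp, mul_neg, neg_add_rev]
    ring
  refine ⟨fun n => if n = 1 then 3 - c else a (n - 2), fun n => b (n - 2),
    fun n => if n = 0 then 1 else if n = 1 then X ^ 3 + C 3 * X
      else P (n + 2) + C (a (n - 2)) * P n + C (b (n - 2)) * P (n - 2),
    rfl, ?_, fun n hn => ?_, ?_, ?_, ?_⟩
  · simp only [one_ne_zero, if_false, if_true, hP1, hP3, C_sub]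
    ring
  · simp [show n ≠ 0 by omega, show n ≠ 1 by omega]
  · rintro (_ | _ | k) hk
    · omega
    · simpa [← derivAtI_apply] using derivAtI_X_pow_three_add_C_mul_X 3
    · simpa [← derivAtI_apply] using (hab k).1
  · rintro (_ | _ | k) hk
    · omega
    · simpa [weightedIntegral_apply] using weightedIntegral_eq_zero_of_odd hint hsymm hcubic
    · simpa [weightedIntegral_apply] using (hab k).2.1
  · rintro (_ | _ | k) hk
    · omega
    · omega
    · simpa [weightedIntegral_apply] using (hab k).2.2

end Integrals

/-- Proposition 2.2 of the paper: existence of the DEK-type family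
`R_n` is equivalent to the nonvanishing of the determinants det ℰ_n (n even ≥ 2)
and det 𝒪_n (n odd ≥ 3). -/
theorem stmt_0
    (μ : Measure ℝ)
    (hsymm : μ.map (fun x => -x) = μ)
    (hsupp : (measSupport μ).Infinite)
    (hint : ∀ p : Polynomial ℝ, Integrable (fun x => p.eval x) μ)
    (P : ℕ → Polynomial ℝ)
    (hPmonic : ∀ n, (P n).Monic)
    (hPdeg : ∀ n, (P n).natDegree = n)
    (hPorth : ∀ m n, m ≠ n → ∫ x, (P m).eval x * (P n).eval x ∂μ = 0)
    (hPparity : ∀ n x, (P n).eval (-x) = (-1 : ℝ)^n * (P n).eval x)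
    :
    (∃ A B : ℕ → ℝ, ∃ R : ℕ → Polynomial ℝ,
      R 0 = 1 ∧
      R 1 = P 3 + Polynomial.C (A 1) * P 1 ∧
      (∀ n, 2 ≤ n →
        R n = P (n+2) + Polynomial.C (A n) * P n + Polynomial.C (B n) * P (n-2)) ∧
      (∀ n, 1 ≤ n → devC (R n) Complex.I = 0) ∧
      (∀ n, 1 ≤ n → ∫ x, (R n).eval x / (1+x^2)^2 ∂μ = 0) ∧
      (∀ n, 2 ≤ n → ∫ x, (R 1).eval x * (R n).eval x / (1+x^2)^2 ∂μ = 0))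
    ↔
    ((∀ n, 2 ≤ n → Even n →
        Matrix.det
          !![devC (P n) Complex.I, devC (P (n-2)) Complex.I;
             ((∫ x, (P n).eval x / (1+x^2)^2 ∂μ : ℝ) : ℂ),
             ((∫ x, (P (n-2)).eval x / (1+x^2)^2 ∂μ : ℝ) : ℂ)] ≠ 0) ∧
     (∀ n, 3 ≤ n → Odd n →
        Matrix.det
          !![devC (P n) Complex.I, devC (P (n-2)) Complex.I;
             ((∫ x, (x^3 + 3*x) * (P n).eval x / (1+x^2)^2 ∂μ : ℝ) : ℂ),
             ((∫ x, (x^3 + 3*x) * (P (n-2)).eval x / (1+x^2)^2 ∂μ : ℝ) : ℂ)] ≠ 0)) := by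
  have hpar : ∀ n, (P n).comp (-X) = C ((-1 : ℝ) ^ n) * P n :=
    fun n => comp_neg_X_of_eval_neg (hPparity n)
  have horth : ∀ m n, m ≠ n → polyIntegral hint (P m * P n) = 0 := by
    simpa [polyIntegral] using hPorth
  obtain ⟨hP1, hP3⟩ := P_one_eq_X_and_P_three_eq hpar hPmonic hPdeg
  constructor
  · rintro ⟨A, B, R, hR⟩
    have hQ := IsDEKFamily.isAdmissible hint hP1 hP3 hR
    exact ⟨fun n => det_matE_ne_zero hint hpar hsymm hsupp hPmonic hPdeg horth hQ,
      fun n => det_matO_ne_zero hint hpar hsymm hsupp hPmonic hPdeg horth hQ⟩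
  · rintro ⟨hE, hO⟩
    choose a b hab using exists_isAdmissible_of_det_ne_zero hint hpar hsymm hE hO
    exact exists_isDEKFamily hint hP1 hP3 hsymm hab
end

section
/- The polynomials R_n are orthogonal with respect to the measure (1+x²)^{−2} dμ(x): for all nonnegative integers n ≠ m one has ∫ R_n(x) R_m(x) (1+x²)^{−2} dμ(x) = 0, while for every n ≥ 0 one has ∫ R_n(x)² (1+x²)^{−2} dμ(x) ≠ 0. -/
open MeasureTheory Polynomial

/-! ### Auxiliary definitions and lemmas -/

/-- The weight polynomial `(1+X²)²`. -/
noncomputable def ww : Polynomial ℝ := (1 + X^2)^2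

lemma ww_monic : ww.Monic := by
  have h : (1 + X^2 : Polynomial ℝ) = X^2 + C 1 := by ring_nf; simp [add_comm]
  rw [ww, h]
  exact (monic_X_pow_add_C 1 (by norm_num)).pow 2

lemma ww_natDegree : ww.natDegree = 4 := by
  have h : (1 + X^2 : Polynomial ℝ) = X^2 + C 1 := by ring_nf; simp [add_comm]
  rw [ww, h, natDegree_pow, natDegree_X_pow_add_C]

lemma ww_degree : ww.degree = 4 := by
  rw [degree_eq_natDegree ww_monic.ne_zero, ww_natDegree]; rfl

lemma ww_ne_one : ww ≠ (1 : Polynomial ℝ) := by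
  intro h
  have := ww_natDegree
  rw [h] at this
  simp at this

/-- Any real polynomial of degree at most 3 whose derivative vanishes at `i`
has the form `a + d·(X³ + 3X)`. -/
lemma cubic (r : Polynomial ℝ) (h3 : r.natDegree ≤ 3) (hd : devC r Complex.I = 0) :
    r = C (r.coeff 0) + C (r.coeff 3) * (X^3 + C 3 * X) := by
  have hmap : (r.map (algebraMap ℝ ℂ)).natDegree ≤ 3 := natDegree_map_le.trans h3
  have hder : (Polynomial.derivative (r.map (algebraMap ℝ ℂ))).natDegree < 3 :=
    lt_of_le_of_lt (natDegree_derivative_le _) (by omega)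
  have hev := eval_eq_sum_range' hder Complex.I
  rw [devC, hev] at hd
  simp only [Finset.sum_range_succ, Finset.sum_range_zero, coeff_derivative, coeff_map] at hd
  have hre := congrArg Complex.re hd
  have him := congrArg Complex.im hd
  simp [Complex.add_re, Complex.add_im, Complex.mul_re, Complex.mul_im, Complex.I_sq] at hre him
  apply Polynomial.ext; intro N
  match N with
  | 0 => simp
  | 1 =>
    simp only [coeff_add, coeff_C_mul, coeff_C, coeff_X_pow, coeff_X, coeff_one]
    norm_num; linarith
  | 2 =>
    simp only [coeff_add, coeff_C_mul, coeff_C, coeff_X_pow, coeff_X, coeff_one]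
    norm_num; exact him
  | 3 =>
    simp only [coeff_add, coeff_C_mul, coeff_C, coeff_X_pow, coeff_X, coeff_one]
    norm_num
  | (N+4) =>
    have hz : r.coeff (N+4) = 0 := coeff_eq_zero_of_natDegree_lt (by omega)
    simp only [coeff_add, coeff_C_mul, coeff_C, coeff_X_pow, coeff_X, coeff_one, hz]
    norm_num
    intro h; exact absurd h (by omega)

lemma denom_pos (x : ℝ) : (0:ℝ) < (1+x^2)^2 := by positivity

lemma intg (μ : Measure ℝ) (hint : ∀ p : Polynomial ℝ, Integrable (fun x => p.eval x) μ)
    (p : Polynomial ℝ) : Integrable (fun x => p.eval x / (1+x^2)^2) μ := by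
  refine (hint p).mono ?_ ?_
  · exact (Continuous.div p.continuous (by continuity)
      (fun x => (denom_pos x).ne')).aestronglyMeasurable
  · refine Filter.Eventually.of_forall (fun x => ?_)
    rw [norm_div]
    refine div_le_self (norm_nonneg _) ?_
    rw [Real.norm_eq_abs, abs_of_pos (denom_pos x)]
    nlinarith [sq_nonneg x]

/-- The integral of `p` against the modified measure. -/
noncomputable def J (μ : Measure ℝ) (p : Polynomial ℝ) : ℝ :=
  ∫ x, p.eval x / (1+x^2)^2 ∂μ

lemma J_add (μ : Measure ℝ) (hint : ∀ p : Polynomial ℝ, Integrable (fun x => p.eval x) μ)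
    (p q : Polynomial ℝ) : J μ (p + q) = J μ p + J μ q := by
  rw [J, J, J, show (fun x => (p+q).eval x / (1+x^2)^2)
      = fun x => p.eval x / (1+x^2)^2 + q.eval x / (1+x^2)^2 from
      funext fun x => by simp [add_div]]
  exact integral_add (intg μ hint p) (intg μ hint q)

lemma J_Cmul (μ : Measure ℝ) (c : ℝ) (p : Polynomial ℝ) : J μ (C c * p) = c * J μ p := by
  rw [J, J, show (fun x => (C c * p).eval x / (1+x^2)^2)
      = fun x => c * (p.eval x / (1+x^2)^2) from funext fun x => by simp [mul_div_assoc]]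
  exact integral_const_mul c _

lemma J_w (μ : Measure ℝ) (p : Polynomial ℝ) : J μ (ww * p) = ∫ x, p.eval x ∂μ := by
  rw [J, show (fun x => (ww * p).eval x / (1+x^2)^2) = fun x => p.eval x from
    funext fun x => by
      simp only [eval_mul, ww, eval_pow, eval_add, eval_one, eval_X]
      exact mul_div_cancel_left₀ _ (denom_pos x).ne']

lemma K_add (μ : Measure ℝ) (hint : ∀ p : Polynomial ℝ, Integrable (fun x => p.eval x) μ)
    (p q : Polynomial ℝ) : ∫ x, (p+q).eval x ∂μ = (∫ x, p.eval x ∂μ) + ∫ x, q.eval x ∂μ := by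
  rw [show (fun x => (p+q).eval x) = fun x => p.eval x + q.eval x from funext fun x => by simp]
  exact integral_add (hint p) (hint q)

lemma K_Cmul (μ : Measure ℝ) (c : ℝ) (p : Polynomial ℝ) :
    ∫ x, (C c * p).eval x ∂μ = c * ∫ x, p.eval x ∂μ := by
  rw [show (fun x => (C c * p).eval x) = fun x => c * p.eval x from funext fun x => by simp]
  exact integral_const_mul c _

lemma devC_add (p q : Polynomial ℝ) (z : ℂ) : devC (p + q) z = devC p z + devC q z := by
  simp [devC]

lemma devC_w_mul (p : Polynomial ℝ) : devC (ww * p) Complex.I = 0 := by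
  rw [devC, Polynomial.map_mul]
  have hw : ww.map (algebraMap ℝ ℂ) = (1 + X^2)^2 := by
    simp [ww, Polynomial.map_pow, Polynomial.map_add, Polynomial.map_one]
  rw [derivative_mul, eval_add, eval_mul, eval_mul, hw]
  have h0 : ((1:ℂ[X]) + X^2).eval Complex.I = 0 := by simp [Complex.I_sq]
  rw [derivative_pow]
  simp [h0]

/-- Polynomials of degree `< k` are orthogonal to `P k`. -/
lemma orth_low (μ : Measure ℝ) (hint : ∀ p : Polynomial ℝ, Integrable (fun x => p.eval x) μ)
    (P : ℕ → Polynomial ℝ)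
    (hPmonic : ∀ n, (P n).Monic) (hPdeg : ∀ n, (P n).natDegree = n)
    (hPorth : ∀ m n, m ≠ n → ∫ x, (P m).eval x * (P n).eval x ∂μ = 0) :
    ∀ d k (q : Polynomial ℝ), q.natDegree ≤ d → d < k → ∫ x, (q * P k).eval x ∂μ = 0 := by
  intro d
  induction d with
  | zero =>
    intro k q hq hk
    have hP0 : P 0 = 1 := (Polynomial.Monic.natDegree_eq_zero (hPmonic 0)).mp (hPdeg 0)
    rw [eq_C_of_natDegree_le_zero hq, K_Cmul μ]
    have h2 : ∫ x, (P k).eval x ∂μ = 0 := by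
      have := hPorth 0 k (by omega)
      simpa [hP0] using this
    rw [h2, mul_zero]
  | succ d ih =>
    intro k q hq hk
    set c := q.coeff (d+1) with hc
    have hdeg' : (q - C c * P (d+1)).natDegree ≤ d := by
      rw [natDegree_le_iff_coeff_eq_zero]
      intro N hN
      rcases eq_or_lt_of_le (Nat.succ_le_of_lt hN) with h|h
      · rw [coeff_sub, coeff_C_mul, ← h]
        have h1 : (P (d+1)).coeff (d+1) = 1 := by
          have := (hPmonic (d+1)).coeff_natDegree
          rwa [hPdeg (d+1)] at this
        rw [h1, hc]; ring
      · have h1 : q.coeff N = 0 := coeff_eq_zero_of_natDegree_lt (lt_of_le_of_lt hq h)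
        have h2 : (P (d+1)).coeff N = 0 := coeff_eq_zero_of_natDegree_lt (by rw [hPdeg]; omega)
        rw [coeff_sub, coeff_C_mul, h1, h2]; ring
    rw [show q * P k = (q - C c * P (d+1)) * P k + C c * (P (d+1) * P k) from by ring,
      K_add μ hint, K_Cmul μ, ih k _ hdeg' (by omega)]
    have h3 : ∫ x, (P (d+1) * P k).eval x ∂μ = 0 := by
      have := hPorth (d+1) k (by omega)
      simpa using this
    rw [h3]; ring

lemma degR (P : ℕ → Polynomial ℝ)
    (hPmonic : ∀ n, (P n).Monic) (hPdeg : ∀ n, (P n).natDegree = n)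
    (A B : ℕ → ℝ) (R : ℕ → Polynomial ℝ)
    (hRn : ∀ n, 2 ≤ n →
      R n = P (n+2) + Polynomial.C (A n) * P n + Polynomial.C (B n) * P (n-2))
    (n : ℕ) (hn : 2 ≤ n) :
    (R n).natDegree = n + 2 ∧ (R n).coeff (n+2) = 1 := by
  have hco : (R n).coeff (n+2) = 1 := by
    rw [hRn n hn, coeff_add, coeff_add, coeff_C_mul, coeff_C_mul]
    have h1 : (P (n+2)).coeff (n+2) = 1 := by
      have := (hPmonic (n+2)).coeff_natDegree; rwa [hPdeg] at this
    have h2 : (P n).coeff (n+2) = 0 := coeff_eq_zero_of_natDegree_lt (by rw [hPdeg]; omega)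
    have h3 : (P (n-2)).coeff (n+2) = 0 := coeff_eq_zero_of_natDegree_lt (by rw [hPdeg]; omega)
    rw [h1, h2, h3]; ring
  constructor
  · refine le_antisymm ?_ (le_natDegree_of_ne_zero (by rw [hco]; norm_num))
    rw [hRn n hn]
    refine (natDegree_add_le _ _).trans (max_le ((natDegree_add_le _ _).trans (max_le ?_ ?_)) ?_)
    · rw [hPdeg]
    · exact (natDegree_C_mul_le _ _).trans (by rw [hPdeg]; omega)
    · exact (natDegree_C_mul_le _ _).trans (by rw [hPdeg]; omega)
  · exact hco

/-- Theorem 2.3: the polynomials R_n are orthogonal with respect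
to (1+x²)^{-2} dμ(x). -/
theorem stmt_1
    (μ : Measure ℝ)
    (hsymm : μ.map (fun x => -x) = μ)
    (hsupp : (measSupport μ).Infinite)
    (hint : ∀ p : Polynomial ℝ, Integrable (fun x => p.eval x) μ)
    (P : ℕ → Polynomial ℝ)
    (hPmonic : ∀ n, (P n).Monic)
    (hPdeg : ∀ n, (P n).natDegree = n)
    (hPorth : ∀ m n, m ≠ n → ∫ x, (P m).eval x * (P n).eval x ∂μ = 0)
    (hPparity : ∀ n x, (P n).eval (-x) = (-1 : ℝ)^n * (P n).eval x)
    (A B : ℕ → ℝ) (R : ℕ → Polynomial ℝ)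
    (hR0 : R 0 = 1)
    (hR1 : R 1 = P 3 + Polynomial.C (A 1) * P 1)
    (hRn : ∀ n, 2 ≤ n →
      R n = P (n+2) + Polynomial.C (A n) * P n + Polynomial.C (B n) * P (n-2))
    (hRi : ∀ n, 1 ≤ n → devC (R n) Complex.I = 0)
    (hRii : ∀ n, 1 ≤ n → ∫ x, (R n).eval x / (1+x^2)^2 ∂μ = 0)
    (hRiii : ∀ n, 2 ≤ n → ∫ x, (R 1).eval x * (R n).eval x / (1+x^2)^2 ∂μ = 0)
    :
    (∀ n m : ℕ, n ≠ m → ∫ x, (R n).eval x * (R m).eval x / (1+x^2)^2 ∂μ = 0) ∧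
    (∀ n : ℕ, ∫ x, ((R n).eval x)^2 / (1+x^2)^2 ∂μ ≠ 0) := by
  -- degree of R 1
  have hR1deg : (R 1).natDegree ≤ 3 := by
    rw [hR1]
    refine (natDegree_add_le _ _).trans (max_le (by rw [hPdeg])
      ((natDegree_C_mul_le _ _).trans (by rw [hPdeg]; omega)))
  have hR1c : (R 1).coeff 3 = 1 := by
    rw [hR1, coeff_add, coeff_C_mul]
    have h1 : (P 3).coeff 3 = 1 := by
      have := (hPmonic 3).coeff_natDegree; rwa [hPdeg] at this
    have h2 : (P 1).coeff 3 = 0 := coeff_eq_zero_of_natDegree_lt (by rw [hPdeg]; omega)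
    rw [h1, h2]; ring
  -- X^3 + 3X in terms of R 1
  have hS : (X^3 + C 3 * X : Polynomial ℝ) = R 1 - C ((R 1).coeff 0) := by
    have h := cubic (R 1) hR1deg (hRi 1 (by norm_num))
    rw [hR1c, C_1, one_mul] at h
    linear_combination -h
  -- the key orthogonality computation
  have key : ∀ n m : ℕ, n < m → J μ (R n * R m) = 0 := by
    intro n m hnm
    rcases Nat.eq_zero_or_pos n with hn0 | hn1
    · rw [hn0, hR0, one_mul]
      exact hRii m (by omega)
    · have hm2 : 2 ≤ m := by omega
      set Q := R n /ₘ ww with hQ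
      set r := R n %ₘ ww with hr
      have hdecomp : R n = ww * Q + r := by
        have h := modByMonic_add_div (R n) ww
        rw [← h]; ring
      have hrdeg : r.natDegree ≤ 3 := by
        have h := natDegree_modByMonic_lt (R n) ww_monic ww_ne_one
        rw [ww_natDegree, ← hr] at h; omega
      have hrdev : devC r Complex.I = 0 := by
        have h := hRi n (by omega)
        rw [hdecomp, devC_add, devC_w_mul, zero_add] at h
        exact h
      have hcub := cubic r hrdeg hrdev
      rw [hS] at hcub
      set α := r.coeff 0 - r.coeff 3 * (R 1).coeff 0 with hα
      set δ := r.coeff 3 with hδ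
      have hrform : r = C α + C δ * R 1 := by
        rw [hcub, hα, hδ]
        simp only [map_sub, map_mul]
        ring
      have hpoly : R n * R m = ww * (Q * R m) + (C α * R m + C δ * (R 1 * R m)) := by
        rw [hdecomp, hrform]; ring
      rw [hpoly, J_add μ hint, J_add μ hint, J_Cmul, J_Cmul, J_w]
      have h2 : J μ (R m) = 0 := hRii m (by omega)
      have h3 : J μ (R 1 * R m) = 0 := by
        rw [J, show (fun x => (R 1 * R m).eval x / (1+x^2)^2)
          = fun x => (R 1).eval x * (R m).eval x / (1+x^2)^2 from funext fun x => by simp]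
        exact hRiii m hm2
      have h1 : ∫ x, (Q * R m).eval x ∂μ = 0 := by
        rcases eq_or_lt_of_le (show 1 ≤ n from hn1) with h1' | h1'
        · -- n = 1 : Q = 0
          have hQ0 : Q = 0 := by
            rw [hQ, divByMonic_eq_zero_iff ww_monic, ww_degree, ← h1']
            refine lt_of_le_of_lt degree_le_natDegree ?_
            exact_mod_cast Nat.lt_succ_of_le hR1deg
          rw [hQ0]
          simp
        · -- n ≥ 2
          have hn2 : 2 ≤ n := h1'
          have hQdeg : Q.natDegree ≤ n - 2 := by
            rw [hQ, natDegree_divByMonic _ ww_monic, ww_natDegree,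
              (degR P hPmonic hPdeg A B R hRn n hn2).1]
            omega
          rw [show Q * R m = Q * P (m+2) + (C (A m) * (Q * P m) + C (B m) * (Q * P (m-2)))
            from by rw [hRn m hm2]; ring]
          rw [K_add μ hint, K_add μ hint, K_Cmul, K_Cmul]
          rw [orth_low μ hint P hPmonic hPdeg hPorth (n-2) (m+2) Q hQdeg (by omega),
            orth_low μ hint P hPmonic hPdeg hPorth (n-2) m Q hQdeg (by omega),
            orth_low μ hint P hPmonic hPdeg hPorth (n-2) (m-2) Q hQdeg (by omega)]
          ring
      rw [h1, h2, h3]; ring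
  -- R n is never the zero polynomial
  have hRne : ∀ n, R n ≠ 0 := by
    intro n
    match n, Nat.lt_or_ge n 2 with
    | 0, _ => rw [hR0]; exact one_ne_zero
    | 1, _ =>
      intro h
      rw [h] at hR1c
      simp at hR1c
    | (n+2), _ =>
      intro h
      have := (degR P hPmonic hPdeg A B R hRn (n+2) (by omega)).2
      rw [h] at this
      simp at this
  constructor
  · intro n m hne
    have hconv : ∀ a b : ℕ, ∫ x, (R a).eval x * (R b).eval x / (1+x^2)^2 ∂μ = J μ (R a * R b) := by
      intro a b
      rw [J]
      congr 1
      funext x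
      simp
    rcases lt_or_gt_of_ne hne with h | h
    · rw [hconv]; exact key n m h
    · rw [hconv, mul_comm]; exact key m n h
  · intro n h0
    set f : ℝ → ℝ := fun x => ((R n).eval x)^2 / (1+x^2)^2 with hf
    have hfint : Integrable f μ := by
      have h := intg μ hint ((R n)^2)
      simpa [hf, eval_pow] using h
    have hnn : 0 ≤ f := fun x => by
      rw [hf]
      positivity
    have hae : f =ᵐ[μ] 0 := (integral_eq_zero_iff_of_nonneg hnn hfint).mp h0
    have hμ0 : μ {x | (R n).eval x ≠ 0} = 0 := by
      have h := hae
      rw [Filter.EventuallyEq, MeasureTheory.ae_iff] at h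
      have hsets : {x | ¬ f x = (0:ℝ→ℝ) x} = {x | (R n).eval x ≠ 0} := by
        ext x
        simp only [Set.mem_setOf_eq, Pi.zero_apply, hf]
        rw [_root_.div_eq_zero_iff]
        constructor
        · intro hx hx'
          exact hx (Or.inl (by rw [hx']; ring))
        · intro hx hx'
          rcases hx' with hx' | hx'
          · exact hx (pow_eq_zero_iff (by norm_num) |>.mp hx')
          · exact (denom_pos x).ne' hx'
      rwa [hsets] at h
    have hopen : IsOpen {x : ℝ | (R n).eval x ≠ 0} :=
      isOpen_compl_singleton.preimage (R n).continuous
    have hsub : measSupport μ ⊆ {x : ℝ | (R n).IsRoot x} := by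
      intro x hx
      by_contra hne
      exact hx {x | (R n).eval x ≠ 0} (hopen.mem_nhds hne) hμ0
    exact hsupp (((R n).finite_setOf_isRoot (hRne n)).subset hsub)
end

section
/- Let n ≥ 2 and let x_1, …, x_{n−1} be distinct real numbers. Then there exists a monic real polynomial f of degree n + 1 such that f(x_j) = 0 for j = 1, …, n−1, the set of real roots of f is exactly {x_1, …, x_{n−1}}, and f′(i) = 0 (and consequently also f′(−i) = 0). -/
open MeasureTheory Polynomial

/-- Logarithmic derivative of a product of linear factors. -/
lemma logderiv_prod {ι : Type*} (s : Finset ι) (r : ι → ℂ) (z : ℂ)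
    (h : ∀ j ∈ s, z - r j ≠ 0) :
    (Polynomial.derivative (∏ j ∈ s, (X - C (r j)))).eval z
      = (∏ j ∈ s, (z - r j)) * ∑ j ∈ s, (z - r j)⁻¹ := by
  classical
  induction s using Finset.induction with
  | empty => simp
  | insert _ _ ha ih =>
    rename_i a t
    rw [Finset.prod_insert ha, derivative_mul, eval_add, eval_mul, eval_mul, eval_prod]
    simp only [eval_sub, eval_X, eval_C, derivative_sub, derivative_X, derivative_C,
      sub_zero, eval_one]
    rw [ih (fun j hj => h j (Finset.mem_insert_of_mem hj))]
    rw [Finset.prod_insert ha, Finset.sum_insert ha]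
    have h0 : z - r a ≠ 0 := h a (Finset.mem_insert_self a t)
    have hp : (∏ j ∈ t, (X - C (r j)) : ℂ[X]).eval z = ∏ j ∈ t, (z - r j) := by
      simp [eval_prod]
    field_simp

/-- Lemma 2.4: given distinct reals x_1,…,x_{n-1} there is a monic
real polynomial f of degree n+1 vanishing exactly at these real points with
f'(i) = f'(-i) = 0. -/
theorem stmt_2 (n : ℕ) (hn : 2 ≤ n) (x : Fin (n-1) → ℝ) (hx : Function.Injective x) :
    ∃ f : Polynomial ℝ, f.Monic ∧ f.natDegree = n + 1 ∧
      (∀ j, f.eval (x j) = 0) ∧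
      (∀ y : ℝ, f.eval y = 0 → ∃ j, y = x j) ∧
      devC f Complex.I = 0 ∧ devC f (-Complex.I) = 0 := by
  classical
  have hne : Nonempty (Fin (n-1)) := ⟨⟨0, by omega⟩⟩
  -- the linear factors at I are nonzero
  have hzr : ∀ j : Fin (n-1), Complex.I - (x j : ℂ) ≠ 0 := by
    intro j h
    have := congrArg Complex.im h
    simp at this
  -- the logarithmic derivative value S and its properties
  set S : ℂ := ∑ j, (Complex.I - (x j : ℂ))⁻¹ with hSdef
  have hSim : S.im < 0 := by
    rw [hSdef, Complex.im_sum]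
    have h1 : ∀ j ∈ (Finset.univ : Finset (Fin (n-1))),
        ((Complex.I - (x j : ℂ))⁻¹).im < 0 := by
      intro j _
      rw [Complex.inv_im]
      have h2 : (Complex.I - (x j : ℂ)).im = 1 := by simp
      have h3 : 0 < Complex.normSq (Complex.I - (x j : ℂ)) :=
        Complex.normSq_pos.2 (hzr j)
      rw [h2]
      exact div_neg_of_neg_of_pos (by norm_num) h3
    calc ∑ j, ((Complex.I - (x j : ℂ))⁻¹).im
        < ∑ _j : Fin (n-1), (0:ℝ) :=
          Finset.sum_lt_sum_of_nonempty Finset.univ_nonempty h1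
      _ = 0 := by simp
  have hS0 : S ≠ 0 := by
    intro h; rw [h] at hSim; simp at hSim
  -- c = S⁻¹ has positive imaginary part
  set c : ℂ := S⁻¹ with hcdef
  have hcim : 0 < c.im := by
    rw [hcdef, Complex.inv_im]
    have h3 : 0 < Complex.normSq S := Complex.normSq_pos.2 hS0
    exact div_pos (by linarith) h3
  -- the real parameters of the quadratic factor
  set e : ℝ := -c.re / (1 + c.im) with hedef
  set d : ℝ := (1 + 2*c.im) * (1 + e^2) with hddef
  have h1c : (1 : ℝ) + c.im ≠ 0 := by positivity
  have hd : 0 < d := by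
    rw [hddef]
    have : (0:ℝ) < 1 + 2*c.im := by linarith
    positivity
  -- the key complex identity
  have hkey : ((Complex.I + (e:ℂ))^2 + (d:ℂ)) + c * (2*(Complex.I + (e:ℂ))) = 0 := by
    rw [Complex.ext_iff]
    constructor
    · simp only [Complex.add_re, Complex.mul_re, Complex.mul_im, Complex.add_im,
        Complex.I_re, Complex.I_im, Complex.ofReal_re, Complex.ofReal_im, pow_two,
        Complex.zero_re, Complex.re_ofNat, Complex.im_ofNat, Complex.zero_im]
      rw [hddef, hedef]
      field_simp
      ring
    · simp only [Complex.add_re, Complex.mul_re, Complex.mul_im, Complex.add_im,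
        Complex.I_re, Complex.I_im, Complex.ofReal_re, Complex.ofReal_im, pow_two,
        Complex.zero_re, Complex.re_ofNat, Complex.im_ofNat, Complex.zero_im]
      rw [hedef]
      field_simp
      ring
  -- the polynomials
  set g : ℝ[X] := ∏ j, (X - C (x j)) with hgdef
  set q : ℝ[X] := (X + C e)^2 + C d with hqdef
  have hdevI : devC (g * q) Complex.I = 0 := by
    have hmapg : g.map (algebraMap ℝ ℂ) = ∏ j, (X - C ((x j : ℂ))) := by
      rw [hgdef, Polynomial.map_prod]
      simp [Polynomial.map_sub]
    have hmapq : q.map (algebraMap ℝ ℂ) = (X + C (e:ℂ))^2 + C (d:ℂ) := by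
      rw [hqdef]
      simp [Polynomial.map_add, Polynomial.map_pow]
    have hw : (∏ j, (X - C ((x j : ℂ)))).eval Complex.I
        = ∏ j, (Complex.I - (x j : ℂ)) := by simp [eval_prod]
    have hld := logderiv_prod Finset.univ (fun j : Fin (n-1) => (x j : ℂ)) Complex.I
      (fun j _ => hzr j)
    rw [devC, Polynomial.map_mul, hmapg, hmapq, derivative_mul, eval_add,
      eval_mul, eval_mul, hld, hw]
    have hqI : ((X + C (e:ℂ))^2 + C (d:ℂ)).eval Complex.I
        = (Complex.I + (e:ℂ))^2 + (d:ℂ) := by simp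
    have hqI' : (Polynomial.derivative ((X + C (e:ℂ))^2 + C (d:ℂ))).eval Complex.I
        = 2*(Complex.I + (e:ℂ)) := by
      simp [derivative_pow]
    rw [hqI, hqI']
    have hSc : S * c = 1 := mul_inv_cancel₀ hS0
    have h2 : S * (((Complex.I + (e:ℂ))^2 + (d:ℂ)) + c * (2*(Complex.I + (e:ℂ)))) = 0 := by
      rw [hkey]; ring
    calc (∏ j, (Complex.I - (x j : ℂ))) * S * ((Complex.I + (e:ℂ))^2 + (d:ℂ))
          + (∏ j, (Complex.I - (x j : ℂ))) * (2*(Complex.I + (e:ℂ)))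
        = (∏ j, (Complex.I - (x j : ℂ))) *
            (S * (((Complex.I + (e:ℂ))^2 + (d:ℂ)) + c * (2*(Complex.I + (e:ℂ))))
              + (1 - S * c) * (2*(Complex.I + (e:ℂ)))) := by ring
      _ = 0 := by rw [h2, hSc]; ring
  refine ⟨g * q, ?_, ?_, ?_, ?_, ?_, ?_⟩
  case _ =>
    -- Monic
    have hgm : g.Monic := monic_prod_of_monic _ _ (fun j _ => monic_X_sub_C (x j))
    have hqm : q.Monic := by
      refine ((monic_X_add_C e).pow 2).add_of_left ?_
      have : ((X + C e)^2 : ℝ[X]).degree = 2 := by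
        rw [degree_pow, degree_X_add_C]; rfl
      rw [this]
      exact lt_of_le_of_lt (degree_C_le) (by norm_num)
    exact hgm.mul hqm
  case _ =>
    -- natDegree
    have hgm : g.Monic := monic_prod_of_monic _ _ (fun j _ => monic_X_sub_C (x j))
    have hqm : q.Monic := by
      refine ((monic_X_add_C e).pow 2).add_of_left ?_
      have : ((X + C e)^2 : ℝ[X]).degree = 2 := by
        rw [degree_pow, degree_X_add_C]; rfl
      rw [this]
      exact lt_of_le_of_lt (degree_C_le) (by norm_num)
    rw [hgm.natDegree_mul hqm]
    have hgd : g.natDegree = n - 1 := by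
      rw [hgdef, natDegree_prod _ _ (fun j _ => X_sub_C_ne_zero (x j))]
      simp
    have hqd : q.natDegree = 2 := by
      have hdeg : ((X + C e)^2 : ℝ[X]).degree = 2 := by
        rw [degree_pow, degree_X_add_C]; rfl
      have : q.degree = 2 := by
        rw [hqdef, degree_add_eq_left_of_degree_lt, hdeg]
        rw [hdeg]
        exact lt_of_le_of_lt (degree_C_le) (by norm_num)
      exact natDegree_eq_of_degree_eq_some this
    rw [hgd, hqd]
    omega
  case _ =>
    -- vanishing at the x j
    intro j
    rw [eval_mul, hgdef, eval_prod]
    rw [Finset.prod_eq_zero (Finset.mem_univ j) (by simp)]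
    ring
  case _ =>
    -- real roots only among the x j
    intro y hy
    rw [eval_mul] at hy
    have hq : q.eval y = (y + e)^2 + d := by simp [hqdef]
    have hqpos : 0 < q.eval y := by rw [hq]; positivity
    have hg : g.eval y = 0 := by
      rcases mul_eq_zero.1 hy with h | h
      · exact h
      · exact absurd h (ne_of_gt hqpos)
    rw [hgdef, eval_prod] at hg
    obtain ⟨j, _, hj⟩ := Finset.prod_eq_zero_iff.1 hg
    simp only [eval_sub, eval_X, eval_C, sub_eq_zero] at hj
    exact ⟨j, hj⟩
  case _ => exact hdevI
  case _ =>
    -- f'(-i) = 0 by conjugation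
    have haev : ∀ z : ℂ, devC (g * q) z = Polynomial.aeval z (Polynomial.derivative (g * q)) := by
      intro z
      rw [devC, Polynomial.derivative_map, Polynomial.aeval_def, Polynomial.eval_map]
    rw [haev]
    rw [show (-Complex.I) = (starRingEnd ℂ) Complex.I by simp]
    rw [Polynomial.aeval_conj]
    rw [← haev, hdevI]
    simp
end

section
/- Define linear functionals on polynomials by c^{(0)}(p) = p′(i), c^{(1)}(p) = p′(−i), and, for k ≥ 1, c^{(k+1)}(p) = ∫ p(x) ψ_{k−1}(x) (1+x²)^{−2} dμ(x), where ψ_0(x) = 1 and ψ_k(x) = x^{k+2} + ((k+2)/k) x^k for k ≥ 1. Then for every k ≥ 0 and every j with 0 ≤ j ≤ k + 1 one has c^{(j)}(R_k) = 0. -/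
open MeasureTheory Polynomial

/-- The functions ψ_k: ψ_0 = 1 and ψ_k(x) = x^{k+2} + ((k+2)/k) x^k for k ≥ 1. -/
noncomputable def psiFun (k : ℕ) (x : ℝ) : ℝ :=
  if k = 0 then 1 else x^(k+2) + (((k : ℝ) + 2) / (k : ℝ)) * x^k

/-- The linear functionals c^{(j)}: c^{(0)}(p) = p'(i), c^{(1)}(p) = p'(-i), and
c^{(k+1)}(p) = ∫ p ψ_{k-1} (1+x²)^{-2} dμ for k ≥ 1. -/
noncomputable def cFun (μ : Measure ℝ) (j : ℕ) (p : Polynomial ℝ) : ℂ :=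
  if j = 0 then devC p Complex.I
  else if j = 1 then devC p (-Complex.I)
  else ((∫ x, p.eval x * psiFun (j-2) x / (1+x^2)^2 ∂μ : ℝ) : ℂ)

lemma devC_eq (p : Polynomial ℝ) (z : ℂ) :
    devC p z = Polynomial.aeval z (Polynomial.derivative p) := by
  rw [devC, Polynomial.derivative_map, Polynomial.eval_map, Polynomial.aeval_def]

lemma devC_conj (p : Polynomial ℝ) (h : devC p Complex.I = 0) :
    devC p (-Complex.I) = 0 := by
  rw [devC_eq] at h ⊢
  have h2 : (-Complex.I) = Complex.conjAe Complex.I := by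
    simp [Complex.conjAe_coe]
  rw [h2, Polynomial.aeval_algHom_apply, h, map_zero]

lemma lin_char (R1 r : Polynomial ℝ)
    (h3 : R1.natDegree = 3) (hl : R1.coeff 3 = 1)
    (h1 : Polynomial.aeval Complex.I (Polynomial.derivative R1) = 0)
    (hr3 : r.natDegree ≤ 3)
    (hri : Polynomial.aeval Complex.I (Polynomial.derivative r) = 0) :
    ∃ a b : ℝ, r = Polynomial.C a + Polynomial.C b * R1 := by
  set b := r.coeff 3 with hb
  set s := r - Polynomial.C b * R1 with hs
  have hcoef : ∀ n, 3 ≤ n → s.coeff n = 0 := by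
    intro n hn
    rcases eq_or_lt_of_le hn with h | h
    · simp [hs, ← h, Polynomial.coeff_C_mul, hl, hb]
    · have hr1 : r.coeff n = 0 := Polynomial.coeff_eq_zero_of_natDegree_lt (lt_of_le_of_lt hr3 h)
      have hr2 : R1.coeff n = 0 := Polynomial.coeff_eq_zero_of_natDegree_lt (by omega)
      simp [hs, Polynomial.coeff_C_mul, hr1, hr2]
  have hsd : s.natDegree ≤ 2 :=
    Polynomial.natDegree_le_iff_coeff_eq_zero.mpr (fun N hN => hcoef N (by omega))
  have hsi : Polynomial.aeval Complex.I (Polynomial.derivative s) = 0 := by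
    rw [hs, Polynomial.derivative_sub, Polynomial.derivative_C_mul, map_sub, map_mul,
      hri, h1, mul_zero, sub_zero]
  have hd1 : (Polynomial.derivative s).natDegree ≤ 1 :=
    le_trans (Polynomial.natDegree_derivative_le s) (by omega)
  rw [Polynomial.eq_X_add_C_of_natDegree_le_one hd1] at hsi
  simp only [map_add, map_mul, Polynomial.aeval_X, Polynomial.aeval_C,
    Complex.coe_algebraMap] at hsi
  rw [Complex.ext_iff] at hsi
  simp at hsi
  obtain ⟨h0, h1'⟩ := hsi
  have hs1 : s.coeff 1 = 0 := by
    have := Polynomial.coeff_derivative s 0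
    simp at this
    rw [← this]; exact h0
  have hs2 : s.coeff 2 = 0 := by
    have := Polynomial.coeff_derivative s 1
    have h2 : s.coeff 2 * 2 = 0 := by
      norm_num at this; rw [← this]; exact h1'
    linarith
  have hs0 : s.natDegree ≤ 0 := by
    apply Polynomial.natDegree_le_iff_coeff_eq_zero.mpr
    intro N hN
    rcases (by omega : N = 1 ∨ N = 2 ∨ 3 ≤ N) with h|h|h
    · rw [h]; exact hs1
    · rw [h]; exact hs2
    · exact hcoef N h
  refine ⟨s.coeff 0, b, ?_⟩
  have := Polynomial.eq_C_of_natDegree_le_zero hs0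
  rw [hs] at this
  rw [show r = r - Polynomial.C b * R1 + Polynomial.C b * R1 by ring, this]

/-- Theorem 3.1: the family R_k is "almost" biorthogonal with
respect to the functionals c^{(j)}: c^{(j)}(R_k) = 0 for 0 ≤ j ≤ k+1. -/
theorem stmt_4
    (μ : Measure ℝ)
    (hsymm : μ.map (fun x => -x) = μ)
    (hsupp : (measSupport μ).Infinite)
    (hint : ∀ p : Polynomial ℝ, Integrable (fun x => p.eval x) μ)
    (P : ℕ → Polynomial ℝ)
    (hPmonic : ∀ n, (P n).Monic)
    (hPdeg : ∀ n, (P n).natDegree = n)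
    (hPorth : ∀ m n, m ≠ n → ∫ x, (P m).eval x * (P n).eval x ∂μ = 0)
    (hPparity : ∀ n x, (P n).eval (-x) = (-1 : ℝ)^n * (P n).eval x)
    (A B : ℕ → ℝ) (R : ℕ → Polynomial ℝ)
    (hR0 : R 0 = 1)
    (hR1 : R 1 = P 3 + Polynomial.C (A 1) * P 1)
    (hRn : ∀ n, 2 ≤ n →
      R n = P (n+2) + Polynomial.C (A n) * P n + Polynomial.C (B n) * P (n-2))
    (hRi : ∀ n, 1 ≤ n → devC (R n) Complex.I = 0)
    (hRii : ∀ n, 1 ≤ n → ∫ x, (R n).eval x / (1+x^2)^2 ∂μ = 0)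
    (hRiii : ∀ n, 2 ≤ n → ∫ x, (R 1).eval x * (R n).eval x / (1+x^2)^2 ∂μ = 0)
    :
    ∀ k j : ℕ, j ≤ k + 1 → cFun μ j (R k) = 0 := by
  -- integrability helpers
  have hintMul : ∀ p q : Polynomial ℝ, Integrable (fun x => p.eval x * q.eval x) μ := by
    intro p q; simpa only [Polynomial.eval_mul] using hint (p * q)
  have hintDiv : ∀ p : Polynomial ℝ, Integrable (fun x => p.eval x / (1+x^2)^2) μ := by
    intro p
    refine ((hint p).abs).mono' ?_ ?_
    · exact ((p.continuous).div (by continuity) (fun x => by positivity)).aestronglyMeasurable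
    · refine Filter.Eventually.of_forall (fun x => ?_)
      have hD1 : (1:ℝ) ≤ (1+x^2)^2 := by nlinarith [sq_nonneg x]
      rw [Real.norm_eq_abs, abs_div, abs_of_nonneg (by positivity : (0:ℝ) ≤ (1+x^2)^2)]
      exact le_trans (div_le_self (abs_nonneg _) hD1) le_rfl
  -- orthogonality
  have horth : ∀ n : ℕ, ∀ p : Polynomial ℝ, p.natDegree < n →
      ∫ x, (P n).eval x * p.eval x ∂μ = 0 := by
    have key : ∀ d : ℕ, ∀ n : ℕ, d < n → ∀ p : Polynomial ℝ, p.natDegree ≤ d →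
        ∫ x, (P n).eval x * p.eval x ∂μ = 0 := by
      intro d
      induction d with
      | zero =>
        intro n hn p hp
        have hP0 : P 0 = 1 := by
          have hc := Polynomial.eq_C_of_natDegree_le_zero ((hPdeg 0).le)
          have hc0 : (P 0).coeff 0 = 1 := by
            have := (hPmonic 0).coeff_natDegree
            rwa [hPdeg 0] at this
          rw [hc, hc0, map_one]
        have hO := hPorth n 0 (by omega)
        rw [hP0] at hO
        simp only [Polynomial.eval_one, mul_one] at hO
        have hpC := Polynomial.eq_C_of_natDegree_le_zero hp
        calc ∫ x, (P n).eval x * p.eval x ∂μ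
            = ∫ x, (p.coeff 0) * (P n).eval x ∂μ := by
              congr 1; funext x; rw [hpC]; simp [mul_comm]
          _ = (p.coeff 0) * ∫ x, (P n).eval x ∂μ := integral_const_mul _ _
          _ = 0 := by rw [hO, mul_zero]
      | succ d ih =>
        intro n hn p hp
        set c := p.coeff (d+1) with hcdef
        set p' := p - Polynomial.C c * P (d+1) with hp'
        have hc1 : (P (d+1)).coeff (d+1) = 1 := by
          have := (hPmonic (d+1)).coeff_natDegree
          rwa [hPdeg (d+1)] at this
        have hp'deg : p'.natDegree ≤ d := by
          apply Polynomial.natDegree_le_iff_coeff_eq_zero.mpr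
          intro N hN
          rcases eq_or_lt_of_le (show d+1 ≤ N by omega) with h|h
          · simp [hp', ← h, Polynomial.coeff_C_mul, hc1, hcdef]
          · have h1 : p.coeff N = 0 := Polynomial.coeff_eq_zero_of_natDegree_lt (by omega)
            have h2 : (P (d+1)).coeff N = 0 :=
              Polynomial.coeff_eq_zero_of_natDegree_lt (by rw [hPdeg]; omega)
            simp [hp', Polynomial.coeff_C_mul, h1, h2]
        have hsplit : ∀ x:ℝ, (P n).eval x * p.eval x
            = c * ((P n).eval x * (P (d+1)).eval x) + (P n).eval x * p'.eval x := by
          intro x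
          simp only [hp', Polynomial.eval_sub, Polynomial.eval_mul, Polynomial.eval_C]
          ring
        simp only [hsplit]
        rw [integral_add ((hintMul _ _).const_mul c) (hintMul (P n) p'),
          integral_const_mul, hPorth n (d+1) (by omega), ih n (by omega) p' hp'deg,
          mul_zero, add_zero]
    exact fun n p h => key p.natDegree n h p le_rfl
  intro k j hj
  rcases j with _ | j
  · -- j = 0
    rw [show cFun μ 0 (R k) = devC (R k) Complex.I from rfl]
    rcases Nat.eq_zero_or_pos k with hk | hk
    · subst hk; rw [hR0]; simp [devC]
    · exact hRi k hk
  rcases j with _ | m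
  · -- j = 1
    rw [show cFun μ 1 (R k) = devC (R k) (-Complex.I) from rfl]
    rcases Nat.eq_zero_or_pos k with hk | hk
    · subst hk; rw [hR0]; simp [devC]
    · exact devC_conj _ (hRi k hk)
  -- j = m + 2
  have hk1 : 1 ≤ k := by omega
  have hcf : cFun μ (m+2) (R k) = ((∫ x, (R k).eval x * psiFun m x / (1+x^2)^2 ∂μ : ℝ) : ℂ) := by
    simp [cFun]
  rw [hcf, Complex.ofReal_eq_zero]
  rcases Nat.eq_zero_or_pos m with hm | hm
  · subst hm
    have he : (fun x:ℝ => (R k).eval x * psiFun 0 x / (1+x^2)^2)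
        = fun x => (R k).eval x / (1+x^2)^2 := by
      funext x; simp [psiFun]
    rw [he]
    exact hRii k hk1
  -- main case: m ≥ 1, k ≥ m + 1 ≥ 2
  have hk2 : 2 ≤ k := by omega
  have hm0 : (m:ℝ) ≠ 0 := Nat.cast_ne_zero.mpr (by omega)
  set cc : ℝ := ((m:ℝ)+2)/(m:ℝ) with hcc
  set Ψ : Polynomial ℝ := X^(m+2) + Polynomial.C cc * X^m with hΨ
  set w : Polynomial ℝ := (X^2 + Polynomial.C 1)^2 with hw
  have hwm : w.Monic := (Polynomial.monic_X_pow_add_C (1:ℝ) (by norm_num)).pow 2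
  have hwdeg : w.natDegree = 4 := by
    rw [hw, Polynomial.natDegree_pow, Polynomial.natDegree_X_pow_add_C]
  set q := Ψ /ₘ w with hq
  set r := Ψ %ₘ w with hr
  have hdecomp : r + w * q = Ψ := Polynomial.modByMonic_add_div Ψ w
  have hrdeg : r.natDegree ≤ 3 := by
    by_cases h0 : r = 0
    · simp [h0]
    · have hlt := Polynomial.degree_modByMonic_lt Ψ hwm
      rw [← hr] at hlt
      rw [Polynomial.degree_eq_natDegree hwm.ne_zero, hwdeg] at hlt
      have := (Polynomial.natDegree_lt_iff_degree_lt h0).mpr hlt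
      omega
  have hΨdeg : Ψ.natDegree = m + 2 := by
    rw [hΨ, Polynomial.natDegree_add_eq_left_of_natDegree_lt, Polynomial.natDegree_X_pow]
    apply lt_of_le_of_lt (Polynomial.natDegree_C_mul_le _ _)
    rw [Polynomial.natDegree_X_pow, Polynomial.natDegree_X_pow]
    omega
  have hqcase : q = 0 ∨ (q.natDegree < k - 2 ∧ q.natDegree < k) := by
    by_cases h0 : q = 0
    · exact Or.inl h0
    · right
      have hΨ0 : Ψ ≠ 0 := fun h => by
        rw [h] at hΨdeg; simp at hΨdeg
      have hm2 : 2 ≤ m := by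
        by_contra hcon
        apply h0
        apply (Polynomial.divByMonic_eq_zero_iff hwm).mpr
        rw [Polynomial.degree_eq_natDegree hΨ0, Polynomial.degree_eq_natDegree hwm.ne_zero,
          hΨdeg, hwdeg]
        exact_mod_cast (by omega : m + 2 < 4)
      have hqd : q.natDegree = m + 2 - 4 := by
        rw [hq, Polynomial.natDegree_divByMonic Ψ hwm, hΨdeg, hwdeg]
      omega
  -- derivative computations at I
  have hΨder : Polynomial.aeval Complex.I (Polynomial.derivative Ψ) = 0 := by
    rw [hΨ, Polynomial.derivative_add, Polynomial.derivative_C_mul, Polynomial.derivative_X_pow,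
      Polynomial.derivative_X_pow]
    simp only [map_add, map_mul, map_pow, Polynomial.aeval_X, Polynomial.aeval_C,
      Polynomial.aeval_natCast, Complex.coe_algebraMap]
    have hpow : Complex.I^(m+2-1) = -Complex.I^(m-1) := by
      rw [show m+2-1 = (m-1)+2 by omega, pow_add, Complex.I_sq]; ring
    have hccm : (cc:ℂ) * (m:ℂ) = (m:ℂ) + 2 := by
      have : cc * (m:ℝ) = (m:ℝ) + 2 := div_mul_cancel₀ _ hm0
      exact_mod_cast congrArg (Complex.ofReal) this
    rw [hpow]
    push_cast
    linear_combination (Complex.I^(m-1)) * hccm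
  have hwqder : Polynomial.aeval Complex.I (Polynomial.derivative (w * q)) = 0 := by
    have hu : Polynomial.aeval Complex.I ((X^2 + Polynomial.C 1 : Polynomial ℝ)) = 0 := by
      simp [Complex.I_sq]
    rw [Polynomial.derivative_mul, hw, Polynomial.derivative_pow]
    simp [hu]
  have hrI : Polynomial.aeval Complex.I (Polynomial.derivative r) = 0 := by
    have hre : r = Ψ - w * q := by rw [← hdecomp]; ring
    rw [hre, Polynomial.derivative_sub, map_sub, hΨder, hwqder, sub_zero]
  -- R 1 facts
  have hR1deg : (R 1).natDegree = 3 := by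
    rw [hR1, Polynomial.natDegree_add_eq_left_of_natDegree_lt, hPdeg]
    apply lt_of_le_of_lt (Polynomial.natDegree_C_mul_le _ _)
    rw [hPdeg, hPdeg]; omega
  have hR1c : (R 1).coeff 3 = 1 := by
    rw [hR1, Polynomial.coeff_add]
    have h1 : (P 3).coeff 3 = 1 := by
      have := (hPmonic 3).coeff_natDegree; rwa [hPdeg 3] at this
    have h2 : (Polynomial.C (A 1) * P 1).coeff 3 = 0 :=
      Polynomial.coeff_eq_zero_of_natDegree_lt
        (lt_of_le_of_lt (Polynomial.natDegree_C_mul_le _ _) (by rw [hPdeg]; omega))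
    rw [h1, h2, add_zero]
  obtain ⟨a, b, hrab⟩ := lin_char (R 1) r hR1deg hR1c
    (by rw [← devC_eq]; exact hRi 1 le_rfl) hrdeg hrI
  -- orthogonality integral
  have hIq : ∫ x, (R k).eval x * q.eval x ∂μ = 0 := by
    rcases hqcase with h0 | ⟨hlt2, hlt⟩
    · simp [h0]
    · rw [hRn k hk2]
      have hsplit : ∀ x:ℝ, (P (k+2) + Polynomial.C (A k) * P k
            + Polynomial.C (B k) * P (k-2)).eval x * q.eval x
          = (P (k+2)).eval x * q.eval x + (A k * ((P k).eval x * q.eval x)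
            + B k * ((P (k-2)).eval x * q.eval x)) := by
        intro x
        simp only [Polynomial.eval_add, Polynomial.eval_mul, Polynomial.eval_C]
        ring
      simp only [hsplit]
      have hIa : Integrable (fun x => A k * (eval x (P k) * eval x q)) μ :=
        (hintMul _ _).const_mul _
      have hIb : Integrable (fun x => B k * (eval x (P (k-2)) * eval x q)) μ :=
        (hintMul _ _).const_mul _
      have hIab : Integrable (fun x => A k * (eval x (P k) * eval x q)
          + B k * (eval x (P (k-2)) * eval x q)) μ := hIa.add hIb
      rw [integral_add (hintMul _ _) hIab, integral_add hIa hIb,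
        integral_const_mul, integral_const_mul,
        horth (k+2) q (by omega), horth k q hlt, horth (k-2) q hlt2]
      ring
  -- pointwise identity and final computation
  have hpt : ∀ x : ℝ, (R k).eval x * psiFun m x / (1+x^2)^2
      = (R k).eval x * q.eval x + (a * ((R k).eval x / (1+x^2)^2)
        + b * ((R 1).eval x * (R k).eval x / (1+x^2)^2)) := by
    intro x
    have hD : ((1:ℝ)+x^2)^2 ≠ 0 := by positivity
    have hΨx : psiFun m x = (1+x^2)^2 * q.eval x + (a + b * (R 1).eval x) := by
      have hx := congrArg (Polynomial.eval x) hdecomp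
      simp only [hΨ, hw, hrab, Polynomial.eval_add, Polynomial.eval_mul, Polynomial.eval_pow,
        Polynomial.eval_X, Polynomial.eval_C] at hx
      rw [psiFun, if_neg (by omega : ¬ m = 0)]
      rw [← hx]
      ring
    rw [hΨx]
    field_simp
  have hI3 : Integrable (fun x => (R 1).eval x * (R k).eval x / (1+x^2)^2) μ := by
    simpa only [Polynomial.eval_mul] using hintDiv (R 1 * R k)
  simp only [hpt]
  have hIa : Integrable (fun x => a * (eval x (R k) / (1+x^2)^2)) μ :=
    (hintDiv (R k)).const_mul a
  have hIb : Integrable (fun x => b * (eval x (R 1) * eval x (R k) / (1+x^2)^2)) μ :=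
    hI3.const_mul b
  have hIab : Integrable (fun x => a * (eval x (R k) / (1+x^2)^2)
      + b * (eval x (R 1) * eval x (R k) / (1+x^2)^2)) μ := hIa.add hIb
  rw [integral_add (hintMul _ _) hIab, integral_add hIa hIb,
    integral_const_mul, integral_const_mul,
    hIq, hRii k hk1, hRiii k hk2]
  ring
end

section
/- For every n ≥ 0: c_n := R_n(i)R_{n+1}(−i) − R_{n+1}(i)R_n(−i) ≠ 0; the polynomial (1+x²)² divides D_n(x) in ℂ[x], where D_n(x) is the determinant of the 3×3 matrix whose rows are (R_n(i), R_{n+1}(i), R_{n+2}(i)), (R_n(−i), R_{n+1}(−i), R_{n+2}(−i)), and (R_n(x), R_{n+1}(x), R_{n+2}(x)); and the quotient S_n(x) := D_n(x)/(c_n(1+x²)²) is a polynomial with real coefficients that is monic of degree n and satisfies S_n(−x) = (−1)^n S_n(x). -/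
open MeasureTheory Polynomial

/-- c_n = R_n(i) R_{n+1}(-i) - R_{n+1}(i) R_n(-i). -/
noncomputable def cconst (R : ℕ → Polynomial ℝ) (n : ℕ) : ℂ :=
  evC (R n) Complex.I * evC (R (n+1)) (-Complex.I)
    - evC (R (n+1)) Complex.I * evC (R n) (-Complex.I)

/-- The 3×3 determinant polynomial D_n(x) ∈ ℂ[x], whose first two rows are the
values of R_n, R_{n+1}, R_{n+2} at i and -i and whose last row consists of the
polynomials themselves. -/
noncomputable def Dpoly (R : ℕ → Polynomial ℝ) (n : ℕ) : Polynomial ℂ :=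
  Matrix.det
    !![Polynomial.C (evC (R n) Complex.I), Polynomial.C (evC (R (n+1)) Complex.I),
         Polynomial.C (evC (R (n+2)) Complex.I);
       Polynomial.C (evC (R n) (-Complex.I)), Polynomial.C (evC (R (n+1)) (-Complex.I)),
         Polynomial.C (evC (R (n+2)) (-Complex.I));
       (R n).map (algebraMap ℝ ℂ), (R (n+1)).map (algebraMap ℝ ℂ),
         (R (n+2)).map (algebraMap ℝ ℂ)]

namespace Stmt5Aux

lemma evC_aeval (p : Polynomial ℝ) (z : ℂ) : evC p z = aeval z p := by
  simp [evC, aeval_def, eval_map]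

lemma devC_evC (p : Polynomial ℝ) (z : ℂ) : devC p z = evC (derivative p) z := by
  simp [devC, evC, derivative_map]

lemma comp_neg_X_coeff (p : Polynomial ℝ) (j : ℕ) :
    (p.comp (-X)).coeff j = (-1)^j * p.coeff j := by
  induction p using Polynomial.induction_on' with
  | add p q hp hq => simp [add_comp, hp, hq, mul_add]
  | monomial k a =>
      rw [← C_mul_X_pow_eq_monomial, mul_comp, C_comp, X_pow_comp]
      have hnx : (-X : Polynomial ℝ)^k = C ((-1)^k) * X^k := by
        rw [neg_pow]
        simp [C_neg, map_pow]
      rw [hnx]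
      rw [mul_left_comm, coeff_C_mul, coeff_C_mul]
      rcases eq_or_ne j k with rfl | hjk
      · simp [coeff_X_pow]
      · simp [coeff_X_pow, hjk, Ne.symm hjk]

lemma parity_comp (p : Polynomial ℝ) (ε : ℝ) (h : ∀ x : ℝ, p.eval (-x) = ε * p.eval x) :
    p.comp (-X) = C ε * p :=
  Polynomial.funext fun r => by simp [eval_comp, h]

lemma parity_eval (p : Polynomial ℝ) (ε : ℝ) (h : p.comp (-X) = C ε * p) (x : ℝ) :
    p.eval (-x) = ε * p.eval x := by
  have := congrArg (Polynomial.eval x) h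
  simpa [eval_comp] using this

lemma evC_neg (p : Polynomial ℝ) (ε : ℝ) (h : p.comp (-X) = C ε * p) (z : ℂ) :
    evC p (-z) = (ε : ℂ) * evC p z := by
  have h1 : aeval (-z) p = aeval z (p.comp (-X)) := by
    rw [aeval_comp]; simp
  rw [evC_aeval, h1, h, evC_aeval]
  simp

lemma devC_neg (p : Polynomial ℝ) (ε : ℝ) (h : p.comp (-X) = C ε * p) (z : ℂ) :
    devC p (-z) = -(ε : ℂ) * devC p z := by
  have hd := congrArg Polynomial.derivative h
  rw [derivative_comp] at hd
  simp only [derivative_neg, derivative_X, derivative_C_mul] at hd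
  -- hd : -1 * (derivative p).comp (-X) = C ε * derivative p
  have h2 : (derivative p).comp (-X) = C (-ε) * derivative p := by
    have : (-1 : Polynomial ℝ) * (derivative p).comp (-X) = C ε * derivative p := by
      simpa using hd
    have := congrArg (fun q => (-1 : Polynomial ℝ) * q) this
    simp only [neg_mul, one_mul, neg_neg] at this
    rw [this, C_neg]; ring
  rw [devC_evC, devC_evC, evC_neg _ _ h2]
  push_cast
  ring

end Stmt5Aux

namespace Stmt5Aux

lemma sq_dvd_of_root_of_derivative {K : Type*} [Field K] (p : Polynomial K) (a : K)
    (h0 : p.eval a = 0) (h1 : (derivative p).eval a = 0) : (X - C a)^2 ∣ p := by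
  obtain ⟨u, hu⟩ := (dvd_iff_isRoot.mpr h0)
  have hd := congrArg Polynomial.derivative hu
  rw [derivative_mul] at hd
  have : (derivative p).eval a = u.eval a := by
    rw [hd]; simp
  have hu0 : u.eval a = 0 := by rw [← this, h1]
  obtain ⟨v, hv⟩ := (dvd_iff_isRoot.mpr hu0)
  exact ⟨v, by rw [hu, hv]; ring⟩

lemma monic_quadsq : (((X:Polynomial ℝ)^2+1)^2).Monic := by
  have h : ((X:Polynomial ℝ)^2+1).Monic := by
    have := Polynomial.monic_X_pow_add (p := (1 : Polynomial ℝ)) (n := 2) (by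
      simpa using Polynomial.degree_one_le.trans_lt (by norm_num))
    simpa using this
  exact h.pow 2

lemma quadsq_map : (((X:Polynomial ℝ)^2+1)^2).map (algebraMap ℝ ℂ)
    = (X - C Complex.I)^2 * (X - C (-Complex.I))^2 := by
  have h1 : (X - C Complex.I) * (X - C (-Complex.I)) = (X:Polynomial ℂ)^2 + 1 := by
    have : (X - C Complex.I) * (X - C (-Complex.I)) = X^2 - (C Complex.I)^2 := by
      rw [C_neg]; ring
    rw [this, ← C_pow, Complex.I_sq]
    simp
  calc (((X:Polynomial ℝ)^2+1)^2).map (algebraMap ℝ ℂ)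
      = ((X:Polynomial ℂ)^2+1)^2 := by simp [Polynomial.map_pow]
    _ = ((X - C Complex.I) * (X - C (-Complex.I)))^2 := by rw [h1]
    _ = (X - C Complex.I)^2 * (X - C (-Complex.I))^2 := by rw [mul_pow]

lemma quadsq_dvd (p : Polynomial ℝ) (ε : ℝ) (hpar : p.comp (-X) = C ε * p)
    (h0 : evC p Complex.I = 0) (h1 : devC p Complex.I = 0) :
    (((X:Polynomial ℝ)^2+1)^2 : Polynomial ℝ) ∣ p := by
  have h0' : evC p (-Complex.I) = 0 := by rw [evC_neg p ε hpar, h0, mul_zero]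
  have h1' : devC p (-Complex.I) = 0 := by rw [devC_neg p ε hpar, h1, mul_zero]
  have d1 : (X - C Complex.I)^2 ∣ p.map (algebraMap ℝ ℂ) :=
    sq_dvd_of_root_of_derivative _ _ h0 h1
  have d2 : (X - C (-Complex.I))^2 ∣ p.map (algebraMap ℝ ℂ) :=
    sq_dvd_of_root_of_derivative _ _ h0' h1'
  have hco : IsCoprime ((X:Polynomial ℂ) - C Complex.I) (X - C (-Complex.I)) :=
    Polynomial.isCoprime_X_sub_C_of_isUnit_sub (by
      rw [sub_neg_eq_add, ← two_mul]
      exact (isUnit_iff_ne_zero).mpr (by simp [Complex.I_ne_zero]))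
  have := (hco.pow (n := 2) (m := 2)).mul_dvd d1 d2
  rw [← quadsq_map] at this
  exact (Polynomial.map_dvd_map (algebraMap ℝ ℂ)
    (RingHom.injective _) monic_quadsq).mp this

end Stmt5Aux

namespace Stmt5Aux

noncomputable def MP (ρ : Multiset ℝ) : Polynomial ℝ := (ρ.map (fun r => (X:Polynomial ℝ)^2 - C r)).prod

lemma MP_monic (ρ : Multiset ℝ) : (MP ρ).Monic := by
  apply monic_multiset_prod_of_monic
  intro r _
  simpa using Polynomial.monic_X_pow_sub_C r (n := 2) (by norm_num)

lemma MP_natDegree (ρ : Multiset ℝ) : (MP ρ).natDegree = 2 * ρ.card := by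
  induction ρ using Multiset.induction_on with
  | empty => simp [MP]
  | cons r ρ ih =>
      have h2 : ((X:Polynomial ℝ)^2 - C r).Monic := by
        simpa using Polynomial.monic_X_pow_sub_C r (n := 2) (by norm_num)
      have hd : ((X:Polynomial ℝ)^2 - C r).natDegree = 2 :=
        Polynomial.natDegree_X_pow_sub_C
      rw [show MP (r ::ₘ ρ) = ((X:Polynomial ℝ)^2 - C r) * MP ρ by
        rw [MP, Multiset.map_cons, Multiset.prod_cons]; rfl]
      rw [Polynomial.natDegree_mul (h2.ne_zero) ((MP_monic ρ).ne_zero), hd, ih]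
      simp [Multiset.card_cons]; ring

lemma MP_comp_neg (ρ : Multiset ℝ) : (MP ρ).comp (-X) = MP ρ := by
  induction ρ using Multiset.induction_on with
  | empty => simp [MP]
  | cons r ρ ih =>
      rw [show MP (r ::ₘ ρ) = ((X:Polynomial ℝ)^2 - C r) * MP ρ by
        rw [MP, Multiset.map_cons, Multiset.prod_cons]; rfl]
      rw [mul_comp, ih]
      congr 1
      simp [sub_comp, pow_comp, neg_comp, X_comp]

lemma MP_cons (r : ℝ) (ρ : Multiset ℝ) :
    MP (r ::ₘ ρ) = ((X:Polynomial ℝ)^2 - C r) * MP ρ := by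
  rw [MP, Multiset.map_cons, Multiset.prod_cons]; rfl

end Stmt5Aux

namespace Stmt5Aux

lemma ident_even (ρ : Multiset ℝ) (hρ : ∀ r ∈ ρ, 0 ≤ r) :
    ∃ Pd : Polynomial ℝ,
      (C ((ρ.map (fun r => 1 + r)).prod) : Polynomial ℝ) =
        C ((-1:ℝ)^ρ.card) * MP ρ
          * (1 + C ((ρ.map (fun r => (1+r)⁻¹)).sum) * (1 + X^2))
        + ((X:Polynomial ℝ)^2+1)^2 * Pd
      ∧ (Pd = 0 ∨ Pd.natDegree + 2 ≤ 2 * ρ.card) := by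
  induction ρ using Multiset.induction_on with
  | empty => exact ⟨0, by simp [MP], Or.inl rfl⟩
  | cons r ρ ih =>
      have hr : (0:ℝ) ≤ r := hρ r (Multiset.mem_cons_self _ _)
      have hρ' : ∀ r ∈ ρ, (0:ℝ) ≤ r := fun a ha => hρ a (Multiset.mem_cons_of_mem ha)
      obtain ⟨Pd, hPd, hdeg⟩ := ih hρ'
      have hc : (1:ℝ) + r ≠ 0 := by positivity
      set s := (ρ.map (fun r => (1+r)⁻¹)).sum with hs
      set s' := ((r ::ₘ ρ).map (fun r => (1+r)⁻¹)).sum with hs'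
      have hss : s' = (1+r)⁻¹ + s := by rw [hs', Multiset.map_cons, Multiset.sum_cons]
      have K : (C (1+r) : Polynomial ℝ) * C s' = C (1+r) * C s + 1 := by
        rw [← C_mul, ← C_mul, ← C_1, ← C_add]
        congr 1
        rw [hss]
        field_simp
        ring
      refine ⟨C ((-1:ℝ)^ρ.card) * C s' * MP ρ + C (1+r) * Pd, ?_, ?_⟩
      · have hCprod : (((r ::ₘ ρ).map (fun r => 1 + r)).prod : ℝ) =
            (1+r) * ((ρ.map (fun r => 1 + r)).prod) := by
          rw [Multiset.map_cons, Multiset.prod_cons]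
        rw [hCprod, C_mul, hPd, MP_cons]
        have hE : (C ((-1:ℝ)^(r ::ₘ ρ).card) : Polynomial ℝ) = - C ((-1:ℝ)^ρ.card) := by
          rw [Multiset.card_cons, pow_succ, C_mul]
          simp [mul_comm]
        rw [hE]
        simp only [C_add, C_1] at K ⊢
        linear_combination (-(C ((-1:ℝ)^ρ.card)) * MP ρ * (1+(X:Polynomial ℝ)^2)) * K
      · right
        have h1 : (C ((-1:ℝ)^ρ.card) * C s' * MP ρ).natDegree ≤ 2 * ρ.card := by
          calc (C ((-1:ℝ)^ρ.card) * C s' * MP ρ).natDegree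
              ≤ _ := natDegree_mul_le
            _ ≤ 2 * ρ.card := by
                have := natDegree_mul_le (p := (C ((-1:ℝ)^ρ.card) : Polynomial ℝ)) (q := C s')
                simp [natDegree_C, MP_natDegree] at this ⊢
                omega
        have h2 : (C (1+r) * Pd).natDegree ≤ 2 * ρ.card := by
          rcases hdeg with h | h
          · simp [h]
          · calc (C (1+r) * Pd).natDegree ≤ _ := natDegree_mul_le
              _ ≤ 2 * ρ.card := by simp [natDegree_C]; omega
        calc (C ((-1:ℝ)^ρ.card) * C s' * MP ρ + C (1+r) * Pd).natDegree + 2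
            ≤ max (C ((-1:ℝ)^ρ.card) * C s' * MP ρ).natDegree (C (1+r) * Pd).natDegree + 2 := by
              have := natDegree_add_le (C ((-1:ℝ)^ρ.card) * C s' * MP ρ) (C (1+r) * Pd)
              omega
          _ ≤ 2 * ρ.card + 2 := by omega
          _ = 2 * (r ::ₘ ρ).card := by simp [Multiset.card_cons]; ring

end Stmt5Aux

namespace Stmt5Aux

lemma ident_odd (ρ : Multiset ℝ) (hρ : ∀ r ∈ ρ, 0 ≤ r) :
    ∃ Pd : Polynomial ℝ,
      (C ((ρ.map (fun r => 1 + r)).prod) : Polynomial ℝ) * (X^2 + C 3) =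
        C ((-1:ℝ)^ρ.card) * MP ρ
          * ((1 + 2 * C ((ρ.map (fun r => (1+r)⁻¹)).sum)) * (1 + X^2) + 2)
        + ((X:Polynomial ℝ)^2+1)^2 * Pd
      ∧ (Pd = 0 ∨ Pd.natDegree + 2 ≤ 2 * ρ.card) := by
  induction ρ using Multiset.induction_on with
  | empty =>
      refine ⟨0, ?_, Or.inl rfl⟩
      simp [MP, map_ofNat]
      ring
  | cons r ρ ih =>
      have hr : (0:ℝ) ≤ r := hρ r (Multiset.mem_cons_self _ _)
      have hρ' : ∀ r ∈ ρ, (0:ℝ) ≤ r := fun a ha => hρ a (Multiset.mem_cons_of_mem ha)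
      obtain ⟨Pd, hPd, hdeg⟩ := ih hρ'
      have hc : (1:ℝ) + r ≠ 0 := by positivity
      set s := (ρ.map (fun r => (1+r)⁻¹)).sum with hs
      set s' := ((r ::ₘ ρ).map (fun r => (1+r)⁻¹)).sum with hs'
      have hss : s' = (1+r)⁻¹ + s := by rw [hs', Multiset.map_cons, Multiset.sum_cons]
      have K : (C (1+r) : Polynomial ℝ) * C s' = C (1+r) * C s + 1 := by
        rw [← C_mul, ← C_mul, ← C_1, ← C_add]
        congr 1
        rw [hss]
        field_simp
        ring
      refine ⟨C ((-1:ℝ)^ρ.card) * (1 + 2 * C s') * MP ρ + C (1+r) * Pd, ?_, ?_⟩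
      · have hCprod : (((r ::ₘ ρ).map (fun r => 1 + r)).prod : ℝ) =
            (1+r) * ((ρ.map (fun r => 1 + r)).prod) := by
          rw [Multiset.map_cons, Multiset.prod_cons]
        rw [hCprod, C_mul, MP_cons]
        have hE : (C ((-1:ℝ)^(r ::ₘ ρ).card) : Polynomial ℝ) = - C ((-1:ℝ)^ρ.card) := by
          rw [Multiset.card_cons, pow_succ, C_mul]
          simp [mul_comm]
        rw [hE]
        have hgoal := hPd
        simp only [C_add, C_1] at K ⊢
        calc (1 + C r) * C ((ρ.map (fun r => 1 + r)).prod) * (X^2 + C 3)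
            = (1 + C r) * (C ((ρ.map (fun r => 1 + r)).prod) * (X^2 + C 3)) := by ring
          _ = (1 + C r) * (C ((-1:ℝ)^ρ.card) * MP ρ * ((1 + 2 * C s) * (1 + X^2) + 2)
                + ((X:Polynomial ℝ)^2+1)^2 * Pd) := by rw [hPd]
          _ = _ := by
              linear_combination ((-(2:Polynomial ℝ))*(C ((-1:ℝ)^ρ.card)) * MP ρ * (1+(X:Polynomial ℝ)^2)) * K
      · right
        have h1 : (C ((-1:ℝ)^ρ.card) * (1 + 2 * C s') * MP ρ).natDegree ≤ 2 * ρ.card := by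
          calc (C ((-1:ℝ)^ρ.card) * (1 + 2 * C s') * MP ρ).natDegree
              ≤ _ := natDegree_mul_le
            _ ≤ 2 * ρ.card := by
                have h0 : ((1:Polynomial ℝ) + 2 * C s').natDegree ≤ 0 := by
                  refine le_trans (natDegree_add_le _ _) ?_
                  have h2 : ((2:Polynomial ℝ) * C s').natDegree ≤ 0 := by
                    refine le_trans natDegree_mul_le ?_
                    simp [natDegree_C]
                  simp only [natDegree_one]
                  omega
                have := natDegree_mul_le (p := (C ((-1:ℝ)^ρ.card) : Polynomial ℝ))
                  (q := 1 + 2 * C s')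
                simp [natDegree_C, MP_natDegree, h0] at this ⊢
                omega
        have h2 : (C (1+r) * Pd).natDegree ≤ 2 * ρ.card := by
          rcases hdeg with h | h
          · simp [h]
          · calc (C (1+r) * Pd).natDegree ≤ _ := natDegree_mul_le
              _ ≤ 2 * ρ.card := by simp [natDegree_C]; omega
        calc (C ((-1:ℝ)^ρ.card) * (1 + 2 * C s') * MP ρ + C (1+r) * Pd).natDegree + 2
            ≤ max (C ((-1:ℝ)^ρ.card) * (1 + 2 * C s') * MP ρ).natDegree
                (C (1+r) * Pd).natDegree + 2 := by
              have := natDegree_add_le (C ((-1:ℝ)^ρ.card) * (1 + 2 * C s') * MP ρ) (C (1+r) * Pd)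
              omega
          _ ≤ 2 * ρ.card + 2 := by omega
          _ = 2 * (r ::ₘ ρ).card := by simp [Multiset.card_cons]; ring

end Stmt5Aux

namespace Stmt5Aux

lemma exists_pos_eval (G : Polynomial ℝ) (hmon : G.Monic) : ∃ x : ℝ, 0 < G.eval x := by
  rcases Nat.eq_zero_or_pos G.natDegree with h0 | hpos
  · exact ⟨0, by rw [Polynomial.eq_one_of_monic_natDegree_zero hmon h0]; simp⟩
  · have ht : Filter.Tendsto (fun x => G.eval x) Filter.atTop Filter.atTop := by
      apply Polynomial.tendsto_atTop_of_leadingCoeff_nonneg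
      · exact (Polynomial.natDegree_pos_iff_degree_pos).mp hpos
      · rw [hmon.leadingCoeff]; norm_num
    obtain ⟨x, hx⟩ := (ht.eventually_ge_atTop 1).exists
    exact ⟨x, lt_of_lt_of_le one_pos hx⟩

lemma pos_of_no_root (G : Polynomial ℝ) (hmon : G.Monic) (hnr : ∀ x : ℝ, G.eval x ≠ 0) :
    ∀ x : ℝ, 0 < G.eval x := by
  obtain ⟨x₀, hx₀⟩ := exists_pos_eval G hmon
  intro x
  by_contra hle
  push_neg at hle
  have hlt : G.eval x < 0 := lt_of_le_of_ne hle (hnr x)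
  have hcont : ContinuousOn (fun t => G.eval t) (Set.uIcc x x₀) :=
    (Polynomial.continuous G).continuousOn
  have h0 : (0:ℝ) ∈ Set.uIcc (G.eval x) (G.eval x₀) :=
    Set.mem_uIcc.mpr (Or.inl ⟨le_of_lt hlt, le_of_lt hx₀⟩)
  obtain ⟨c, _, hc⟩ := intermediate_value_uIcc hcont h0
  exact hnr c hc

lemma factor_even_aux : ∀ k : ℕ, ∀ G : Polynomial ℝ, G.natDegree ≤ k → G.Monic →
    G.comp (-X) = G →
    ∃ (ρ : Multiset ℝ) (W : Polynomial ℝ), (∀ r ∈ ρ, 0 ≤ r) ∧ W.Monic ∧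
      (∀ x : ℝ, 0 < W.eval x) ∧ W.comp (-X) = W ∧ G = MP ρ * W := by
  intro k
  induction k using Nat.strong_induction_on with
  | _ k ih =>
    intro G hdeg hmon hpar
    by_cases hroot : ∃ z : ℝ, G.eval z = 0
    · obtain ⟨z, hz⟩ := hroot
      have hdvd : ((X:Polynomial ℝ)^2 - C (z^2)) ∣ G := by
        rcases eq_or_ne z 0 with rfl | hz0
        · have h1 : G.coeff 0 = 0 := by simpa [Polynomial.coeff_zero_eq_eval_zero] using hz
          have h2 : G.coeff 1 = 0 := by
            have := comp_neg_X_coeff G 1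
            rw [hpar] at this
            simp at this
            linarith
          have : (X:Polynomial ℝ)^2 ∣ G := by
            rw [Polynomial.X_pow_dvd_iff]
            intro d hd
            interval_cases d
            · exact h1
            · exact h2
          simpa using this
        · have hz' : G.eval (-z) = 0 := by
            rw [parity_eval G 1 (by simpa using hpar) z, hz, mul_zero]
          have d1 : (X - C z) ∣ G := dvd_iff_isRoot.mpr hz
          have d2 : (X - C (-z)) ∣ G := dvd_iff_isRoot.mpr hz'
          have hco : IsCoprime ((X:Polynomial ℝ) - C z) (X - C (-z)) :=
            Polynomial.isCoprime_X_sub_C_of_isUnit_sub (by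
              rw [sub_neg_eq_add, ← two_mul]
              exact isUnit_iff_ne_zero.mpr (by positivity))
          have := hco.mul_dvd d1 d2
          have hprod : ((X:Polynomial ℝ) - C z) * (X - C (-z)) = X^2 - C (z^2) := by
            rw [C_neg, C_pow]
            ring
          rwa [hprod] at this
      obtain ⟨G₁, hG₁⟩ := hdvd
      have hq : ((X:Polynomial ℝ)^2 - C (z^2)).Monic :=
        Polynomial.monic_X_pow_sub_C (z^2) (n := 2) (by norm_num)
      have hmon₁ : G₁.Monic := hq.of_mul_monic_left (hG₁ ▸ hmon)
      have hne : ((X:Polynomial ℝ)^2 - C (z^2)) ≠ 0 := hq.ne_zero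
      have hpar₁ : G₁.comp (-X) = G₁ := by
        have hqc : ((X:Polynomial ℝ)^2 - C (z^2)).comp (-X) = (X^2 - C (z^2)) := by
          simp [sub_comp, pow_comp, neg_comp, X_comp]
        have : ((X:Polynomial ℝ)^2 - C (z^2)) * G₁.comp (-X)
            = ((X:Polynomial ℝ)^2 - C (z^2)) * G₁ := by
          have := hpar
          conv_lhs at this => rw [hG₁]
          rw [mul_comp, hqc] at this
          rw [this, hG₁]
        exact mul_left_cancel₀ hne this
      have hdeq : G.natDegree = 2 + G₁.natDegree := by
        rw [hG₁, Polynomial.natDegree_mul hne hmon₁.ne_zero]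
        congr 1
        exact Polynomial.natDegree_X_pow_sub_C
      have hlt : G₁.natDegree < k := by
        have h1 : 1 ≤ G.natDegree := by
          by_contra h
          push_neg at h
          interval_cases h' : G.natDegree
          · have : G = 1 := Polynomial.eq_one_of_monic_natDegree_zero hmon h'
            rw [this] at hz; simp at hz
        omega
      obtain ⟨ρ₁, W, hρ₁, hWmon, hWpos, hWpar, hfac⟩ :=
        ih G₁.natDegree hlt G₁ le_rfl hmon₁ hpar₁
      exact ⟨z^2 ::ₘ ρ₁, W, by
          intro r hr
          rcases Multiset.mem_cons.mp hr with rfl | hr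
          · positivity
          · exact hρ₁ r hr,
        hWmon, hWpos, hWpar, by rw [MP_cons, hG₁, hfac]; ring⟩
    · push_neg at hroot
      exact ⟨0, G, by simp, hmon, pos_of_no_root G hmon hroot, hpar, by simp [MP]⟩

end Stmt5Aux

namespace Stmt5Aux

noncomputable def J (μ : Measure ℝ) (p : Polynomial ℝ) : ℝ := ∫ x, p.eval x ∂μ

section Meas

variable {μ : Measure ℝ}

lemma J_add (hint : ∀ p : Polynomial ℝ, Integrable (fun x => p.eval x) μ) (p q : Polynomial ℝ) : J μ (p + q) = J μ p + J μ q := by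
  unfold J
  simp only [eval_add]
  exact integral_add (hint p) (hint q)

lemma J_Cmul (a : ℝ) (p : Polynomial ℝ) : J μ (C a * p) = a * J μ p := by
  unfold J
  simp only [eval_mul, eval_C]
  exact integral_const_mul a _

lemma SP (hint : ∀ p : Polynomial ℝ, Integrable (fun x => p.eval x) μ)
    (hsupp : (measSupport μ).Infinite) (f : Polynomial ℝ) (hf : f ≠ 0)
    (hpos : ∀ x : ℝ, 0 ≤ f.eval x) : 0 < J μ f := by
  unfold J
  rw [integral_pos_iff_support_of_nonneg_ae (Filter.Eventually.of_forall hpos) (hint f)]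
  by_contra h
  push_neg at h
  have h0 : μ (Function.support fun x => f.eval x) = 0 := le_antisymm h zero_le
  have hopen : IsOpen (Function.support fun x => f.eval x) := by
    have : (Function.support fun x => f.eval x) = (fun x => f.eval x) ⁻¹' ({0}ᶜ) := by
      ext x; simp [Function.mem_support]
    rw [this]
    exact (isOpen_compl_singleton).preimage (Polynomial.continuous f)
  have hsub : measSupport μ ⊆ {x | f.IsRoot x} := by
    intro x hx
    by_contra hxr
    exact hx _ (hopen.mem_nhds (by simpa [Function.mem_support, IsRoot] using hxr)) h0
  exact (Polynomial.finite_setOf_isRoot hf).not_infinite (hsupp.mono hsub)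

end Meas

end Stmt5Aux

namespace Stmt5Aux

set_option maxHeartbeats 2000000 in
theorem keyA
    (μ : Measure ℝ)
    (hsupp : (measSupport μ).Infinite)
    (hint : ∀ p : Polynomial ℝ, Integrable (fun x => p.eval x) μ)
    (P : ℕ → Polynomial ℝ)
    (hPmonic : ∀ n, (P n).Monic)
    (hPdeg : ∀ n, (P n).natDegree = n)
    (hPorth : ∀ m n, m ≠ n → ∫ x, (P m).eval x * (P n).eval x ∂μ = 0)
    (hPparity : ∀ n x, (P n).eval (-x) = (-1 : ℝ)^n * (P n).eval x)
    (A B : ℕ → ℝ) (R : ℕ → Polynomial ℝ)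
    (hR0 : R 0 = 1)
    (hR1 : R 1 = P 3 + Polynomial.C (A 1) * P 1)
    (hRn : ∀ n, 2 ≤ n →
      R n = P (n+2) + Polynomial.C (A n) * P n + Polynomial.C (B n) * P (n-2))
    (hRi : ∀ n, 1 ≤ n → devC (R n) Complex.I = 0)
    (hRii : ∀ n, 1 ≤ n → ∫ x, (R n).eval x / (1+x^2)^2 ∂μ = 0)
    (hRiii : ∀ n, 2 ≤ n → ∫ x, (R 1).eval x * (R n).eval x / (1+x^2)^2 ∂μ = 0) :
    (∀ n, (R n).comp (-X) = C ((-1:ℝ)^n) * R n) ∧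
    (∀ m, 1 ≤ m → (R m).Monic ∧ (R m).natDegree = m + 2) ∧
    (∀ n, evC (R n) Complex.I ≠ 0) := by
  have Ppar : ∀ k, (P k).comp (-X) = C ((-1:ℝ)^k) * P k :=
    fun k => parity_comp _ _ (hPparity k)
  -- structure of P 1
  have hP1 : P 1 = X := by
    have h := (hPmonic 1).eq_X_add_C (hPdeg 1)
    have h0 : (P 1).coeff 0 = 0 := by
      have h1 : (P 1).eval 0 = -(P 1).eval 0 := by
        have := hPparity 1 0
        simpa using this
      have h2 : (P 1).eval 0 = 0 := by linarith
      simpa [Polynomial.coeff_zero_eq_eval_zero] using h2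
    rw [h, h0]
    simp
  -- structure of P 3
  have hc0 : (P 3).coeff 0 = 0 := by
    have h := comp_neg_X_coeff (P 3) 0
    rw [Ppar 3, coeff_C_mul] at h
    norm_num at h
    linarith
  have hc2 : (P 3).coeff 2 = 0 := by
    have h := comp_neg_X_coeff (P 3) 2
    rw [Ppar 3, coeff_C_mul] at h
    norm_num at h
    linarith
  have hP3 : P 3 = X^3 + C ((P 3).coeff 1) * X := by
    ext j
    have hd : (P 3).natDegree = 3 := hPdeg 3
    match j with
    | 0 => simpa using hc0
    | 1 => simp
    | 2 => simpa using hc2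
    | 3 =>
        have h1 : (P 3).coeff 3 = 1 := by
          have := (hPmonic 3).coeff_natDegree
          rwa [hd] at this
        simp [h1, coeff_X_pow]
    | (j+4) =>
        have h1 : (P 3).coeff (j+4) = 0 :=
          coeff_eq_zero_of_natDegree_lt (by omega)
        simp [h1, coeff_X_pow]
  -- R 1 = X^3 + 3X
  have hR1' : R 1 = X^3 + C 3 * X := by
    set a := (P 3).coeff 1 with ha
    have hform : R 1 = X^3 + C (a + A 1) * X := by
      rw [hR1, hP1, hP3, C_add]
      ring
    have hdev2 : (3:ℂ) * Complex.I^2 + ((a + A 1 : ℝ):ℂ) = 0 := by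
      have hdev := hRi 1 le_rfl
      rw [hform] at hdev
      rw [devC_evC] at hdev
      rw [show derivative ((X:Polynomial ℝ)^3 + C (a + A 1) * X) = C 3 * X^2 + C (a + A 1) by
        simp [derivative_X_pow]; rw [← C_1, ← C_add]; norm_num] at hdev
      rw [evC_aeval] at hdev
      simp only [map_add, map_mul, map_pow, aeval_X, aeval_C] at hdev
      rw [← hdev]
      norm_num
    have hsq : (Complex.I)^2 = -1 := Complex.I_sq
    have hreal : a + A 1 = 3 := by
      have h3 : ((a + A 1:ℝ):ℂ) = 3 := by
        rw [hsq] at hdev2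
        linear_combination hdev2
      exact_mod_cast h3
    rw [hform, hreal]
  -- parity of R
  have Rpar : ∀ m, (R m).comp (-X) = C ((-1:ℝ)^m) * R m := by
    intro m
    match m with
    | 0 => simp [hR0]
    | 1 =>
        rw [hR1]
        simp only [add_comp, mul_comp, C_comp, Ppar]
        rw [show ((-1:ℝ))^1 = -1 by norm_num, show ((-1:ℝ))^3 = -1 by norm_num]
        ring
    | (m+2) =>
        rw [hRn (m+2) (by omega)]
        simp only [add_comp, mul_comp, C_comp, Ppar, Nat.add_sub_cancel]
        rw [show (m+2+2) = m + 4 by ring]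
        rw [show ((-1:ℝ))^(m+4) = (-1)^(m+2) by rw [pow_add, pow_add]; norm_num,
            show ((-1:ℝ))^m = (-1)^(m+2) by rw [pow_add]; norm_num]
        ring
  -- monicity and degree of R
  have hdP : ∀ k, (P k).degree = (k : WithBot ℕ) := by
    intro k
    rw [Polynomial.degree_eq_natDegree (hPmonic k).ne_zero, hPdeg k]
  have Rmon : ∀ m, 1 ≤ m → (R m).Monic ∧ (R m).natDegree = m + 2 := by
    intro m hm
    match m, hm with
    | 1, _ =>
        constructor
        · rw [hR1']
          apply Polynomial.monic_X_pow_add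
          rw [Polynomial.degree_C_mul_X (by norm_num : (3:ℝ) ≠ 0)]
          decide
        · rw [hR1']
          compute_degree!
    | (m+2), _ =>
        have hlow : (C (A (m+2)) * P (m+2) + C (B (m+2)) * P m).degree
            < (P (m+2+2)).degree := by
          have h1 : (C (A (m+2)) * P (m+2)).degree ≤ ((m+2 : ℕ) : WithBot ℕ) :=
            le_trans (degree_mul_le _ _) (by
              rw [hdP (m+2)]
              simpa using add_le_add degree_C_le (le_refl ((m+2 : ℕ) : WithBot ℕ)))
          have h2 : (C (B (m+2)) * P m).degree ≤ ((m+2 : ℕ) : WithBot ℕ) :=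
            le_trans (degree_mul_le _ _) (by
              rw [hdP m]
              refine le_trans (add_le_add degree_C_le (le_refl _)) ?_
              simp only [zero_add]
              exact_mod_cast Nat.le_add_right m 2)
          refine lt_of_le_of_lt (le_trans (degree_add_le _ _) (max_le h1 h2)) ?_
          rw [hdP (m+2+2)]
          exact_mod_cast by omega
        have hform : R (m+2) = P (m+2+2) + (C (A (m+2)) * P (m+2) + C (B (m+2)) * P m) := by
          rw [hRn (m+2) (by omega), Nat.add_sub_cancel, add_assoc]
        constructor
        · rw [hform]
          exact (hPmonic (m+2+2)).add_of_left hlow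
        · rw [hform]
          have := Polynomial.degree_add_eq_left_of_degree_lt hlow
          rw [hdP (m+2+2)] at this
          have := Polynomial.natDegree_eq_of_degree_eq_some this
          omega
  refine ⟨Rpar, Rmon, ?_⟩
  -- integral machinery
  have JP : ∀ m k, m ≠ k → J μ (P m * P k) = 0 := by
    intro m k hmk
    unfold J
    simp only [eval_mul]
    exact hPorth m k hmk
  have JRP : ∀ n k, 2 ≤ n → k + 3 ≤ n → J μ (R n * P k) = 0 := by
    intro n k hn hk
    have hform : R n * P k
        = P (n+2) * P k + C (A n) * (P n * P k) + C (B n) * (P (n-2) * P k) := by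
      rw [hRn n hn]; ring
    rw [hform, J_add hint, J_add hint, J_Cmul, J_Cmul]
    rw [JP (n+2) k (by omega), JP n k (by omega), JP (n-2) k (by omega)]
    ring
  have Jorth : ∀ n, 2 ≤ n → ∀ k, ∀ q : Polynomial ℝ, q.natDegree ≤ k → k + 3 ≤ n →
      J μ (R n * q) = 0 := by
    intro n hn k
    induction k with
    | zero =>
        intro q hq hk
        have hq' : q = C (q.coeff 0) := Polynomial.eq_C_of_natDegree_le_zero hq
        have hP0 : P 0 = 1 := Polynomial.eq_one_of_monic_natDegree_zero (hPmonic 0) (hPdeg 0)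
        have hsplit : R n * q = C (q.coeff 0) * (R n * P 0) := by
          conv_lhs => rw [hq']
          rw [hP0]
          ring
        rw [hsplit, J_Cmul, JRP n 0 hn (by omega), mul_zero]
    | succ k ih =>
        intro q hq hk
        set c := q.coeff (k+1) with hc
        set q' := q - C c * P (k+1) with hq'def
        have hdeg' : q'.natDegree ≤ k := by
          rw [Polynomial.natDegree_le_iff_coeff_eq_zero]
          intro N hN
          rw [hq'def, Polynomial.coeff_sub, coeff_C_mul]
          rcases eq_or_lt_of_le (Nat.succ_le_of_lt hN) with hNk | hNk
          · rw [← hNk]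
            have h1 : (P (k+1)).coeff (k+1) = 1 := by
              have := (hPmonic (k+1)).coeff_natDegree
              rwa [hPdeg (k+1)] at this
            rw [h1, hc, mul_one, sub_self]
          · have h1 : q.coeff N = 0 := coeff_eq_zero_of_natDegree_lt (by omega)
            have h2 : (P (k+1)).coeff N = 0 := coeff_eq_zero_of_natDegree_lt (by
              rw [hPdeg (k+1)]; omega)
            rw [h1, h2, mul_zero, sub_self]
        have hsplit : R n * q = R n * q' + C c * (R n * P (k+1)) := by
          rw [hq'def]; ring
        rw [hsplit, J_add hint, J_Cmul, ih q' hdeg' (by omega), JRP n (k+1) hn (by omega)]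
        ring
  -- the main claim
  intro n
  match n with
  | 0 =>
      rw [show evC (R 0) Complex.I = 1 by rw [hR0]; simp [evC]]
      exact one_ne_zero
  | 1 =>
      rw [show evC (R 1) Complex.I = 2 * Complex.I by
        rw [hR1', evC_aeval]
        simp only [map_add, map_mul, map_pow, aeval_X, aeval_C]
        have h3 : (Complex.I)^3 = -Complex.I := by
          rw [pow_succ, Complex.I_sq]; ring
        rw [h3]
        have : ((algebraMap ℝ ℂ) 3) = 3 := by norm_num
        rw [this]
        ring]
      simp [Complex.I_ne_zero]
  | (m+2) =>
      intro hzero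
      set N := m + 2 with hNdef
      have hNge : 2 ≤ N := by omega
      have hpar := Rpar N
      have hdvd : ((((X:Polynomial ℝ)^2+1)^2)) ∣ R N :=
        quadsq_dvd (R N) ((-1)^N) hpar hzero (hRi N (by omega))
      obtain ⟨G, hG⟩ := hdvd
      have hmonR := (Rmon N (by omega)).1
      have hdegR := (Rmon N (by omega)).2
      have hGmon : G.Monic := monic_quadsq.of_mul_monic_left (hG ▸ hmonR)
      have hGne : G ≠ 0 := hGmon.ne_zero
      have hGdeg : G.natDegree + 4 = N + 2 := by
        have h := hdegR
        rw [hG, Polynomial.natDegree_mul monic_quadsq.ne_zero hGne] at h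
        have h4 : ((((X:Polynomial ℝ)^2+1)^2)).natDegree = 4 := by compute_degree!
        omega
      have hGpar : G.comp (-X) = C ((-1:ℝ)^N) * G := by
        have hqc : (((((X:Polynomial ℝ)^2+1)^2))).comp (-X) = (((X:Polynomial ℝ)^2+1)^2) := by
          simp [add_comp, pow_comp, neg_comp, X_comp]
        have h := hpar
        rw [hG, mul_comp, hqc] at h
        have h2 : ((((X:Polynomial ℝ)^2+1)^2)) * (G.comp (-X))
            = ((((X:Polynomial ℝ)^2+1)^2)) * (C ((-1:ℝ)^N) * G) := by
          rw [h]; ring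
        exact mul_left_cancel₀ monic_quadsq.ne_zero h2
      have hJG : J μ G = 0 := by
        have h := hRii N (by omega)
        have heq : (fun x : ℝ => G.eval x) = (fun x : ℝ => (R N).eval x / (1+x^2)^2) := by
          funext x
          rw [hG]
          simp only [eval_mul, eval_pow, eval_add, eval_X, eval_one]
          have hx : ((x:ℝ)^2+1)^2 ≠ 0 := by positivity
          field_simp
          ring
        unfold J
        rw [heq, ← h]
      rcases Nat.even_or_odd N with hEv | hOd
      · -- N even
        have hsgn : ((-1:ℝ)^N) = 1 := hEv.neg_one_pow
        have hGpar' : G.comp (-X) = G := by rw [hGpar, hsgn, C_1, one_mul]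
        obtain ⟨ρ, W, hρ, hWmon, hWpos, hWpar, hfac⟩ :=
          factor_even_aux G.natDegree G le_rfl hGmon hGpar'
        have hMPdeg := MP_natDegree ρ
        have hWne : W ≠ 0 := hWmon.ne_zero
        have hMPne : (MP ρ) ≠ 0 := (MP_monic ρ).ne_zero
        have hdegsum : G.natDegree = 2 * ρ.card + W.natDegree := by
          rw [hfac, Polynomial.natDegree_mul hMPne hWne, hMPdeg]
        have hW1 : W = 1 := by
          by_contra hW1
          have hWd : W.natDegree ≠ 0 := fun h =>
            hW1 (Polynomial.eq_one_of_monic_natDegree_zero hWmon h)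
          have hWd2 : 2 ≤ W.natDegree := by
            rcases Nat.even_or_odd W.natDegree with he | ho
            · rcases he with ⟨t, ht⟩
              omega
            · exfalso
              have hcoe := comp_neg_X_coeff W W.natDegree
              rw [hWpar] at hcoe
              rw [ho.neg_one_pow] at hcoe
              have hl : W.coeff W.natDegree = 1 := hWmon.coeff_natDegree
              rw [hl] at hcoe
              norm_num at hcoe
          have hJ0 : J μ (R N * MP ρ) = 0 := by
            apply Jorth N hNge (MP ρ).natDegree _ le_rfl
            rw [hMPdeg]
            omega
          have hpos : 0 < J μ (R N * MP ρ) := by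
            have hpoly : R N * MP ρ = ((((X:Polynomial ℝ)^2+1)^2)) * W * (MP ρ)^2 := by
              rw [hG, hfac]; ring
            rw [hpoly]
            apply SP hint hsupp
            · exact mul_ne_zero (mul_ne_zero monic_quadsq.ne_zero hWne) (pow_ne_zero _ hMPne)
            · intro x
              simp only [eval_mul, eval_pow, eval_add, eval_X, eval_one]
              have hw := hWpos x
              positivity
          rw [hJ0] at hpos
          exact lt_irrefl 0 hpos
        rw [hW1, mul_one] at hfac
        have hdeg2 : G.natDegree = 2 * ρ.card := by rw [hfac]; exact hMPdeg
        obtain ⟨Pd, hid, hPdeg'⟩ := ident_even ρ hρ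
        set cρ := ((ρ.map (fun r => 1 + r)).prod) with hcρ
        set s := ((ρ.map (fun r => (1+r)⁻¹)).sum) with hsdef
        have hs0 : 0 ≤ s := Multiset.sum_nonneg (by
          intro x hx
          obtain ⟨r, hr, rfl⟩ := Multiset.mem_map.mp hx
          have := hρ r hr
          positivity)
        have hid2 : C cρ * G = C ((-1:ℝ)^ρ.card) * (G * G * (1 + C s * (1 + X^2)))
            + R N * Pd := by
          linear_combination G * hid - Pd * hG
            - (C ((-1:ℝ)^ρ.card) * (1 + C s * (1+(X:Polynomial ℝ)^2)) * G) * hfac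
        have hJPd : J μ (R N * Pd) = 0 := by
          rcases hPdeg' with h0 | hle
          · rw [h0, mul_zero]
            unfold J
            simp
          · exact Jorth N hNge Pd.natDegree Pd le_rfl (by omega)
        have hJf₂ : J μ (G * G * (1 + C s * (1 + X^2))) = 0 := by
          have hj := congrArg (J μ) hid2
          rw [J_Cmul, J_add hint, J_Cmul, hJG, hJPd, mul_zero] at hj
          have habs : ((-1:ℝ)^ρ.card) * J μ (G * G * (1 + C s * (1 + X^2))) = 0 := by
            linarith
          have hne : ((-1:ℝ)^ρ.card) ≠ 0 := pow_ne_zero _ (by norm_num)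
          exact (mul_eq_zero.mp habs).resolve_left hne
        have hf₂pos : 0 < J μ (G * G * (1 + C s * (1 + X^2))) := by
          apply SP hint hsupp
          · refine mul_ne_zero (mul_ne_zero hGne hGne) ?_
            intro h
            have h0 := congrArg (Polynomial.eval 0) h
            simp only [eval_add, eval_mul, eval_C, eval_one, eval_X, eval_pow, eval_zero] at h0
            nlinarith
          · intro x
            simp only [eval_mul, eval_add, eval_one, eval_C, eval_pow, eval_X]
            have h1 : 0 ≤ G.eval x * G.eval x := mul_self_nonneg _
            have h2 : 0 ≤ 1 + s * (1 + x^2) := by nlinarith [sq_nonneg x]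
            exact mul_nonneg h1 h2
        rw [hJf₂] at hf₂pos
        exact lt_irrefl 0 hf₂pos
      · -- N odd
        have hsgn : ((-1:ℝ)^N) = -1 := hOd.neg_one_pow
        have hGpar' : G.comp (-X) = C (-1) * G := by rw [hGpar, hsgn]
        have hXdvd : (X : Polynomial ℝ) ∣ G := by
          rw [Polynomial.X_dvd_iff]
          have hcoe := comp_neg_X_coeff G 0
          rw [hGpar', coeff_C_mul] at hcoe
          simp at hcoe
          linarith
        obtain ⟨G₁, hG₁⟩ := hXdvd
        have hG₁mon : G₁.Monic := monic_X.of_mul_monic_left (hG₁ ▸ hGmon)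
        have hG₁ne : G₁ ≠ 0 := hG₁mon.ne_zero
        have hG₁par : G₁.comp (-X) = G₁ := by
          have h := hGpar'
          rw [hG₁, mul_comp, X_comp] at h
          simp only [C_neg, C_1] at h
          have h2 : (X : Polynomial ℝ) * (G₁.comp (-X)) = X * G₁ := by
            linear_combination -h
          exact mul_left_cancel₀ X_ne_zero h2
        have hG₁deg : G.natDegree = 1 + G₁.natDegree := by
          rw [hG₁, Polynomial.natDegree_mul X_ne_zero hG₁ne, natDegree_X]
        obtain ⟨ρ, W, hρ, hWmon, hWpos, hWpar, hfac⟩ :=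
          factor_even_aux G₁.natDegree G₁ le_rfl hG₁mon hG₁par
        have hMPdeg := MP_natDegree ρ
        have hWne : W ≠ 0 := hWmon.ne_zero
        have hMPne : (MP ρ) ≠ 0 := (MP_monic ρ).ne_zero
        have hdegsum : G₁.natDegree = 2 * ρ.card + W.natDegree := by
          rw [hfac, Polynomial.natDegree_mul hMPne hWne, hMPdeg]
        have hW1 : W = 1 := by
          by_contra hW1
          have hWd : W.natDegree ≠ 0 := fun h =>
            hW1 (Polynomial.eq_one_of_monic_natDegree_zero hWmon h)
          have hWd2 : 2 ≤ W.natDegree := by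
            rcases Nat.even_or_odd W.natDegree with he | ho
            · rcases he with ⟨t, ht⟩
              omega
            · exfalso
              have hcoe := comp_neg_X_coeff W W.natDegree
              rw [hWpar] at hcoe
              rw [ho.neg_one_pow] at hcoe
              have hl : W.coeff W.natDegree = 1 := hWmon.coeff_natDegree
              rw [hl] at hcoe
              norm_num at hcoe
          have hXMdeg : ((X : Polynomial ℝ) * MP ρ).natDegree = 1 + 2 * ρ.card := by
            rw [Polynomial.natDegree_mul X_ne_zero hMPne, natDegree_X, hMPdeg]
          have hJ0 : J μ (R N * (X * MP ρ)) = 0 := by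
            apply Jorth N hNge ((X : Polynomial ℝ) * MP ρ).natDegree _ le_rfl
            rw [hXMdeg]
            omega
          have hpos : 0 < J μ (R N * (X * MP ρ)) := by
            have hpoly : R N * (X * MP ρ)
                = ((((X:Polynomial ℝ)^2+1)^2)) * W * ((X : Polynomial ℝ) * MP ρ)^2 := by
              rw [hG, hG₁, hfac]; ring
            rw [hpoly]
            apply SP hint hsupp
            · exact mul_ne_zero (mul_ne_zero monic_quadsq.ne_zero hWne)
                (pow_ne_zero _ (mul_ne_zero X_ne_zero hMPne))
            · intro x
              simp only [eval_mul, eval_pow, eval_add, eval_X, eval_one]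
              have hw := hWpos x
              positivity
          rw [hJ0] at hpos
          exact lt_irrefl 0 hpos
        rw [hW1, mul_one] at hfac
        have hfacG : G = X * MP ρ := by rw [hG₁, hfac]
        have hdeg2 : G.natDegree = 1 + 2 * ρ.card := by
          rw [hG₁deg, hfac]
          rw [hMPdeg]
        have hJR1G : J μ (R 1 * G) = 0 := by
          have h := hRiii N hNge
          have heq : (fun x : ℝ => (R 1 * G).eval x)
              = (fun x : ℝ => (R 1).eval x * (R N).eval x / (1+x^2)^2) := by
            funext x
            rw [hG]
            simp only [eval_mul, eval_pow, eval_add, eval_X, eval_one]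
            have hx : ((x:ℝ)^2+1)^2 ≠ 0 := by positivity
            field_simp
            ring
          unfold J
          rw [heq, ← h]
        obtain ⟨Pd, hid, hPdeg'⟩ := ident_odd ρ hρ
        set cρ := ((ρ.map (fun r => 1 + r)).prod) with hcρ
        set s := ((ρ.map (fun r => (1+r)⁻¹)).sum) with hsdef
        have hs0 : 0 ≤ s := Multiset.sum_nonneg (by
          intro x hx
          obtain ⟨r, hr, rfl⟩ := Multiset.mem_map.mp hx
          have := hρ r hr
          positivity)
        have hR1G : R 1 * G = ((X:Polynomial ℝ)^3 + C 3 * X) * (X * MP ρ) := by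
          rw [hR1', hfacG]
        have hRNf : R N = ((((X:Polynomial ℝ)^2+1)^2)) * ((X:Polynomial ℝ) * MP ρ) := by
          rw [hG, hfacG]
        have hid2 : C cρ * (R 1 * G)
            = C ((-1:ℝ)^ρ.card) * ((X:Polynomial ℝ)^2 * (MP ρ)^2 * ((1 + 2 * C s) * (1 + X^2) + 2))
              + R N * (X * Pd) := by
          rw [hR1G, hRNf]
          linear_combination ((X:Polynomial ℝ)^2 * MP ρ) * hid
        have hJXPd : J μ (R N * (X * Pd)) = 0 := by
          rcases hPdeg' with h0 | hle
          · rw [h0, mul_zero, mul_zero]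
            unfold J
            simp
          · apply Jorth N hNge (1 + Pd.natDegree) _ ?_ (by omega)
            calc ((X:Polynomial ℝ) * Pd).natDegree ≤ _ := natDegree_mul_le
              _ ≤ 1 + Pd.natDegree := by simp [natDegree_X]
        have hJf₂ : J μ ((X:Polynomial ℝ)^2 * (MP ρ)^2 * ((1 + 2 * C s) * (1 + X^2) + 2)) = 0 := by
          have hj := congrArg (J μ) hid2
          rw [J_Cmul, J_add hint, J_Cmul, hJR1G, hJXPd, mul_zero] at hj
          have habs : ((-1:ℝ)^ρ.card)
              * J μ ((X:Polynomial ℝ)^2 * (MP ρ)^2 * ((1 + 2 * C s) * (1 + X^2) + 2)) = 0 := by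
            linarith
          have hne : ((-1:ℝ)^ρ.card) ≠ 0 := pow_ne_zero _ (by norm_num)
          exact (mul_eq_zero.mp habs).resolve_left hne
        have hf₂pos : 0 < J μ ((X:Polynomial ℝ)^2 * (MP ρ)^2 * ((1 + 2 * C s) * (1 + X^2) + 2)) := by
          apply SP hint hsupp
          · refine mul_ne_zero (mul_ne_zero (pow_ne_zero _ X_ne_zero) (pow_ne_zero _ hMPne)) ?_
            intro h
            have h0 := congrArg (Polynomial.eval 0) h
            simp only [eval_add, eval_mul, eval_C, eval_one, eval_X, eval_pow, eval_zero,
              eval_ofNat] at h0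
            nlinarith
          · intro x
            simp only [eval_mul, eval_add, eval_one, eval_C, eval_pow, eval_X, eval_ofNat]
            have h1 : 0 ≤ (x^2 * ((MP ρ).eval x)^2) := by positivity
            have h2 : 0 ≤ (1 + 2*s) * (1 + x^2) + 2 := by nlinarith [sq_nonneg x]
            calc (0:ℝ) ≤ (x^2 * ((MP ρ).eval x)^2) * ((1 + 2*s) * (1 + x^2) + 2) :=
                  mul_nonneg h1 h2
              _ = x^2 * ((MP ρ).eval x)^2 * ((1 + 2*s) * (1 + x^2) + 2) := by ring
        rw [hJf₂] at hf₂pos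
        exact lt_irrefl 0 hf₂pos

end Stmt5Aux

namespace Stmt5Aux

lemma evC_conj (p : Polynomial ℝ) (z : ℂ) :
    evC p ((starRingEnd ℂ) z) = (starRingEnd ℂ) (evC p z) := by
  rw [evC_aeval, evC_aeval]
  simpa using Polynomial.aeval_algHom_apply (Complex.conjAe) z p

lemma evC_sub_linear (a b : ℝ) (p q : Polynomial ℝ) (z : ℂ) :
    evC (C a * p - C b * q) z = (a:ℂ) * evC p z - (b:ℂ) * evC q z := by
  simp [evC_aeval, map_sub, map_mul, aeval_C]

lemma devC_sub_linear (a b : ℝ) (p q : Polynomial ℝ) (z : ℂ) :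
    devC (C a * p - C b * q) z = (a:ℂ) * devC p z - (b:ℂ) * devC q z := by
  rw [devC_evC, devC_evC, devC_evC, derivative_sub, derivative_C_mul, derivative_C_mul]
  exact evC_sub_linear a b _ _ z

end Stmt5Aux


open Stmt5Aux in
set_option maxHeartbeats 2000000 in
/-- Proposition 4.1 together with the definition of S_n: for every
n, c_n ≠ 0, the polynomial (1+x²)² divides D_n(x) in ℂ[x], and the quotient
S_n(x) = D_n(x)/(c_n (1+x²)²) is a real, monic polynomial of degree n with
S_n(-x) = (-1)ⁿ S_n(x). -/
theorem stmt_5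
    (μ : Measure ℝ)
    (hsymm : μ.map (fun x => -x) = μ)
    (hsupp : (measSupport μ).Infinite)
    (hint : ∀ p : Polynomial ℝ, Integrable (fun x => p.eval x) μ)
    (P : ℕ → Polynomial ℝ)
    (hPmonic : ∀ n, (P n).Monic)
    (hPdeg : ∀ n, (P n).natDegree = n)
    (hPorth : ∀ m n, m ≠ n → ∫ x, (P m).eval x * (P n).eval x ∂μ = 0)
    (hPparity : ∀ n x, (P n).eval (-x) = (-1 : ℝ)^n * (P n).eval x)
    (A B : ℕ → ℝ) (R : ℕ → Polynomial ℝ)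
    (hR0 : R 0 = 1)
    (hR1 : R 1 = P 3 + Polynomial.C (A 1) * P 1)
    (hRn : ∀ n, 2 ≤ n →
      R n = P (n+2) + Polynomial.C (A n) * P n + Polynomial.C (B n) * P (n-2))
    (hRi : ∀ n, 1 ≤ n → devC (R n) Complex.I = 0)
    (hRii : ∀ n, 1 ≤ n → ∫ x, (R n).eval x / (1+x^2)^2 ∂μ = 0)
    (hRiii : ∀ n, 2 ≤ n → ∫ x, (R 1).eval x * (R n).eval x / (1+x^2)^2 ∂μ = 0)
    :
    ∀ n : ℕ,
      cconst R n ≠ 0 ∧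
      ((1 + Polynomial.X^2)^2 : Polynomial ℂ) ∣ Dpoly R n ∧
      ∃ S : Polynomial ℝ,
        Polynomial.C (cconst R n) * ((1 + Polynomial.X^2)^2)
            * (S.map (algebraMap ℝ ℂ)) = Dpoly R n ∧
        S.Monic ∧ S.natDegree = n ∧
        (∀ x : ℝ, S.eval (-x) = (-1 : ℝ)^n * S.eval x) := by
  obtain ⟨Rpar, Rmon, hkey⟩ := Stmt5Aux.keyA μ hsupp hint P hPmonic hPdeg hPorth hPparity
    A B R hR0 hR1 hRn hRi hRii hRiii
  intro n
  have hconj : ∀ m, evC (R m) (-Complex.I) = (-1:ℂ)^m * evC (R m) Complex.I := by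
    intro m
    have h := Stmt5Aux.evC_neg (R m) _ (Rpar m) Complex.I
    rw [h]
    push_cast
    ring
  have devR : ∀ m, devC (R m) Complex.I = 0 := by
    intro m
    match m with
    | 0 => rw [hR0]; simp [devC]
    | (k+1) => exact hRi (k+1) (by omega)
  have hRdegle : ∀ m, (R m).natDegree ≤ m + 2 := by
    intro m
    match m with
    | 0 => rw [hR0]; simp
    | (k+1) => rw [(Rmon (k+1) (by omega)).2]
  have hstar : ∀ m, (starRingEnd ℂ) (evC (R m) Complex.I)
      = (-1:ℂ)^m * evC (R m) Complex.I := by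
    intro m
    have h := Stmt5Aux.evC_conj (R m) Complex.I
    rw [Complex.conj_I] at h
    rw [← h, hconj m]
  -- decomposition into real parts
  have hdecomp : ∃ a c : ℝ, a ≠ 0 ∧ c ≠ 0 ∧
      ((evC (R n) Complex.I = (a:ℂ) ∧ evC (R (n+2)) Complex.I = (c:ℂ)) ∨
       (evC (R n) Complex.I = (a:ℂ) * Complex.I
         ∧ evC (R (n+2)) Complex.I = (c:ℂ) * Complex.I)) := by
    rcases Nat.even_or_odd n with hEv | hOd
    · have h1 : (starRingEnd ℂ) (evC (R n) Complex.I) = evC (R n) Complex.I := by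
        rw [hstar n, hEv.neg_one_pow, one_mul]
      have h2 : (starRingEnd ℂ) (evC (R (n+2)) Complex.I) = evC (R (n+2)) Complex.I := by
        rw [hstar (n+2), (by simpa using hEv.add (even_two) : Even (n+2)).neg_one_pow, one_mul]
      refine ⟨(evC (R n) Complex.I).re, (evC (R (n+2)) Complex.I).re, ?_, ?_, Or.inl ⟨?_, ?_⟩⟩
      · intro h
        apply hkey n
        rw [← Complex.conj_eq_iff_re.mp h1, h]
        simp
      · intro h
        apply hkey (n+2)
        rw [← Complex.conj_eq_iff_re.mp h2, h]
        simp
      · exact (Complex.conj_eq_iff_re.mp h1).symm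
      · exact (Complex.conj_eq_iff_re.mp h2).symm
    · have him : ∀ m, Odd m → evC (R m) Complex.I = ((evC (R m) Complex.I).im : ℂ) * Complex.I := by
        intro m hm
        have h1 : (starRingEnd ℂ) (evC (R m) Complex.I) = -evC (R m) Complex.I := by
          rw [hstar m, hm.neg_one_pow]
          ring
        have hre : (evC (R m) Complex.I).re = 0 := by
          have h2 := congrArg Complex.re h1
          simp at h2
          linarith
        apply Complex.ext <;> simp [hre]
      refine ⟨(evC (R n) Complex.I).im, (evC (R (n+2)) Complex.I).im, ?_, ?_,
        Or.inr ⟨him n hOd, him (n+2) (by rcases hOd with ⟨t,ht⟩; exact ⟨t+1, by omega⟩)⟩⟩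
      · intro h
        apply hkey n
        rw [him n hOd, h]
        simp
      · intro h
        apply hkey (n+2)
        rw [him (n+2) (by rcases hOd with ⟨t,ht⟩; exact ⟨t+1, by omega⟩), h]
        simp
  obtain ⟨a, c, hane, hcne, hcase⟩ := hdecomp
  -- the polynomial T
  set T := C a * R (n+2) - C c * R n with hTdef
  have hTev : evC T Complex.I = 0 := by
    rw [hTdef, evC_sub_linear]
    rcases hcase with ⟨h1, h2⟩ | ⟨h1, h2⟩ <;> rw [h1, h2] <;> ring
  have hTdev : devC T Complex.I = 0 := by
    rw [hTdef, devC_sub_linear, devR n, devR (n+2)]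
    ring
  have hTpar : T.comp (-X) = C ((-1:ℝ)^n) * T := by
    rw [hTdef, sub_comp, mul_comp, mul_comp, C_comp, C_comp, Rpar n, Rpar (n+2)]
    rw [show ((-1:ℝ))^(n+2) = (-1)^n by rw [pow_add]; norm_num]
    ring
  obtain ⟨S₀, hS₀⟩ := quadsq_dvd T ((-1)^n) hTpar hTev hTdev
  -- degrees of T
  have hRn2mon := (Rmon (n+2) (by omega)).1
  have hRn2deg' := (Rmon (n+2) (by omega)).2
  have hRn2deg : (R (n+2)).degree = ((n+4:ℕ) : WithBot ℕ) := by
    rw [Polynomial.degree_eq_natDegree hRn2mon.ne_zero, hRn2deg']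
  have hA : (C a * R (n+2)).degree = ((n+4:ℕ) : WithBot ℕ) := by
    rw [Polynomial.degree_mul, Polynomial.degree_C hane, hRn2deg, zero_add]
  have hB : (-(C c * R n)).degree < ((n+4:ℕ) : WithBot ℕ) := by
    rw [Polynomial.degree_neg]
    refine lt_of_le_of_lt (Polynomial.degree_mul_le _ _) ?_
    have h1 : (C c).degree ≤ 0 := Polynomial.degree_C_le
    have h2 : (R n).degree ≤ ((n+2:ℕ) : WithBot ℕ) :=
      le_trans Polynomial.degree_le_natDegree (by exact_mod_cast hRdegle n)
    refine lt_of_le_of_lt (add_le_add h1 h2) ?_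
    rw [zero_add]
    exact_mod_cast (by omega : n+2 < n+4)
  have hTdeg : T.degree = ((n+4:ℕ) : WithBot ℕ) := by
    rw [hTdef, sub_eq_add_neg, Polynomial.degree_add_eq_left_of_degree_lt (by rw [hA]; exact hB),
      hA]
  have hTlc : T.leadingCoeff = a := by
    rw [hTdef, sub_eq_neg_add]
    rw [Polynomial.leadingCoeff_add_of_degree_lt (by rw [hA]; exact hB)]
    rw [Polynomial.leadingCoeff_mul, Polynomial.leadingCoeff_C, hRn2mon.leadingCoeff, mul_one]
  have hTne : T ≠ 0 := fun h0 => hane (by rw [← hTlc, h0, Polynomial.leadingCoeff_zero])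
  have hS₀ne : S₀ ≠ 0 := by
    intro h
    rw [h, mul_zero] at hS₀
    exact hTne hS₀
  have hS₀deg : S₀.natDegree = n := by
    have h := congrArg Polynomial.natDegree hS₀
    rw [Polynomial.natDegree_mul monic_quadsq.ne_zero hS₀ne] at h
    have h4 : ((((X:Polynomial ℝ)^2+1)^2)).natDegree = 4 := by compute_degree!
    have hTn : T.natDegree = n + 4 := Polynomial.natDegree_eq_of_degree_eq_some hTdeg
    omega
  have hS₀lc : S₀.leadingCoeff = a := by
    have h := congrArg Polynomial.leadingCoeff hS₀
    rw [Polynomial.leadingCoeff_mul, monic_quadsq.leadingCoeff, one_mul] at h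
    rw [← h, hTlc]
  set S := C a⁻¹ * S₀ with hSdef
  have hSlc : S.leadingCoeff = 1 := by
    rw [hSdef, Polynomial.leadingCoeff_mul, Polynomial.leadingCoeff_C, hS₀lc]
    field_simp
  have hSmon : S.Monic := hSlc
  have hSdeg : S.natDegree = n := by
    rw [hSdef, Polynomial.natDegree_C_mul (inv_ne_zero hane), hS₀deg]
  have hSpar : ∀ x : ℝ, S.eval (-x) = (-1:ℝ)^n * S.eval x := by
    intro x
    have hTx := Stmt5Aux.parity_eval T _ hTpar x
    rw [hS₀] at hTx
    simp only [eval_mul, eval_pow, eval_add, eval_X, eval_one, eval_C] at hTx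
    have hw : ((x:ℝ)^2+1)^2 ≠ 0 := by positivity
    have hS₀x : S₀.eval (-x) = (-1:ℝ)^n * S₀.eval x := by
      have h2 : (((x:ℝ)^2+1)^2) * S₀.eval (-x) = (((x:ℝ)^2+1)^2) * ((-1:ℝ)^n * S₀.eval x) := by
        rw [show ((-x:ℝ)^2+1)^2 = ((x:ℝ)^2+1)^2 by ring] at hTx
        rw [hTx]
        ring
      exact mul_left_cancel₀ hw h2
    rw [hSdef]
    simp only [eval_mul, eval_C, hS₀x]
    ring
  -- the determinant identity
  have hc : cconst R n = -(2*(-1:ℂ)^n*(evC (R (n+1)) Complex.I)*(evC (R n) Complex.I)) := by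
    unfold cconst
    rw [hconj n, hconj (n+1)]
    ring
  have hD : Dpoly R n
      = 2 * (-1:Polynomial ℂ)^n * C (evC (R (n+1)) Complex.I) * C (evC (R (n+2)) Complex.I)
          * ((R n).map (algebraMap ℝ ℂ))
        + C (cconst R n) * ((R (n+2)).map (algebraMap ℝ ℂ)) := by
    unfold Dpoly
    rw [Matrix.det_fin_three]
    simp
    rw [hconj n, hconj (n+1), hconj (n+2), hc]
    simp only [C_mul, C_neg, C_pow, C_1, map_ofNat]
    ring
  -- scalar identities
  have k2 : cconst R n * ((a⁻¹:ℝ):ℂ) * ((a:ℝ):ℂ) = cconst R n := by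
    have h1 : a⁻¹ * a = 1 := inv_mul_cancel₀ hane
    have h2 : ((a⁻¹:ℝ):ℂ) * ((a:ℝ):ℂ) = 1 := by exact_mod_cast h1
    rw [mul_assoc, h2, mul_one]
  have k1 : cconst R n * ((a⁻¹:ℝ):ℂ) * ((c:ℝ):ℂ)
      = -(2*(-1:ℂ)^n*(evC (R (n+1)) Complex.I)*(evC (R (n+2)) Complex.I)) := by
    have haC : ((a:ℝ):ℂ) ≠ 0 := by exact_mod_cast hane
    rw [hc]
    rcases hcase with ⟨h1, h2⟩ | ⟨h1, h2⟩ <;> rw [h1, h2] <;> field_simp [haC] <;> simp [Complex.ofReal_inv, haC]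
  have hmapT : ((1 + (X:Polynomial ℂ)^2)^2) * (S₀.map (algebraMap ℝ ℂ))
      = C ((a:ℝ):ℂ) * ((R (n+2)).map (algebraMap ℝ ℂ))
        - C ((c:ℝ):ℂ) * ((R n).map (algebraMap ℝ ℂ)) := by
    have h1 := congrArg (fun p => p.map (algebraMap ℝ ℂ)) hS₀
    simp only [hTdef, Polynomial.map_mul, Polynomial.map_sub, Polynomial.map_pow,
      Polynomial.map_add, Polynomial.map_one, Polynomial.map_X, Polynomial.map_C,
      Complex.coe_algebraMap] at h1
    rw [show ((1 + (X:Polynomial ℂ)^2)^2) = (((X:Polynomial ℂ)^2+1)^2) by ring]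
    exact h1.symm
  have hmain : Polynomial.C (cconst R n) * ((1 + Polynomial.X^2)^2)
      * (S.map (algebraMap ℝ ℂ)) = Dpoly R n := by
    rw [hSdef]
    simp only [Polynomial.map_mul, Polynomial.map_C, Complex.coe_algebraMap]
    have k1C := congrArg Polynomial.C k1
    have k2C := congrArg Polynomial.C k2
    simp only [C_mul, C_neg, C_pow, C_1, map_ofNat] at k1C k2C
    calc Polynomial.C (cconst R n) * ((1 + Polynomial.X^2)^2)
          * (Polynomial.C ((a⁻¹:ℝ):ℂ) * S₀.map (algebraMap ℝ ℂ))
        = Polynomial.C (cconst R n) * Polynomial.C ((a⁻¹:ℝ):ℂ)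
            * (((1 + (X:Polynomial ℂ)^2)^2) * S₀.map (algebraMap ℝ ℂ)) := by ring
      _ = Polynomial.C (cconst R n) * Polynomial.C ((a⁻¹:ℝ):ℂ)
            * (C ((a:ℝ):ℂ) * ((R (n+2)).map (algebraMap ℝ ℂ))
                - C ((c:ℝ):ℂ) * ((R n).map (algebraMap ℝ ℂ))) := by rw [hmapT]
      _ = Dpoly R n := by
          rw [hD]
          linear_combination ((R (n+2)).map (algebraMap ℝ ℂ)) * k2C
            - ((R n).map (algebraMap ℝ ℂ)) * k1C
  have hcne0 : cconst R n ≠ 0 := by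
    rw [hc]
    intro h
    rcases mul_eq_zero.mp (neg_eq_zero.mp h) with h' | h'
    · rcases mul_eq_zero.mp h' with h'' | h''
      · rcases mul_eq_zero.mp h'' with h3 | h3
        · norm_num at h3
        · exact pow_ne_zero _ (by norm_num : (-1:ℂ) ≠ 0) h3
      · exact hkey (n+1) h''
    · exact hkey n h'
  exact ⟨hcne0, ⟨Polynomial.C (cconst R n) * (S.map (algebraMap ℝ ℂ)), by rw [← hmain]; ring⟩,
    S, hmain, hSmon, hSdeg, hSpar⟩
end
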